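/- arXiv:1004.5438 — 13 statements merged into one kernel-verified Lean document; each statement's English description precedes it below -/
import Mathlib

section
/- If M is an H-supplemented module satisfying condition (D3), then every direct summand of M is H-supplemented. -/
set_option maxHeartbeats 1000000

universe u v

/-- `N` is a small (superfluous) submodule of `M`. -/
def SmallSub (R : Type v) [Ring R] {M : Type u} [AddCommGroup M] [Module R M]
    (N : Submodule R M) : Prop :=
  ∀ X : Submodule R M, N ⊔ X = ⊤ → X = ⊤

/-- `D` is a direct summand of `M`. -/
def IsDirectSummand (R : Type v) [Ring R] {M : Type u} [AddCommGroup M] [Module R M]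
    (D : Submodule R M) : Prop :=
  ∃ D' : Submodule R M, IsCompl D D'

/-- `M` is H-supplemented: for every submodule `X` there is a direct summand `D`
with `(X+D)/D ≪ M/D` and `(X+D)/X ≪ M/X`. -/
def HSupplemented (R : Type v) [Ring R] (M : Type u) [AddCommGroup M] [Module R M] : Prop :=
  ∀ X : Submodule R M, ∃ D : Submodule R M, IsDirectSummand R D ∧
    SmallSub R ((X ⊔ D).map D.mkQ) ∧ SmallSub R ((X ⊔ D).map X.mkQ)

/-- Condition (D3). -/
def CondD3 (R : Type v) [Ring R] (M : Type u) [AddCommGroup M] [Module R M] : Prop :=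
  ∀ K L : Submodule R M, IsDirectSummand R K → IsDirectSummand R L → K ⊔ L = ⊤ →
    IsDirectSummand R (K ⊓ L)

section Aux

variable {R : Type v} [Ring R] {M : Type u} [AddCommGroup M] [Module R M]

lemma map_mkQ_self' (D : Submodule R M) : D.map D.mkQ = ⊥ := by
  refine le_antisymm ?_ bot_le
  rw [Submodule.map_le_iff_le_comap, Submodule.comap_bot, Submodule.ker_mkQ]

lemma smallSub_mkQ_iff (X D : Submodule R M) :
    SmallSub R ((X ⊔ D).map D.mkQ) ↔ ∀ Y, X ⊔ Y = ⊤ → D ⊔ Y = ⊤ := by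
  constructor
  · intro h Y hXY
    have h1 : ((X ⊔ D).map D.mkQ) ⊔ ((D ⊔ Y).map D.mkQ) = ⊤ := by
      rw [← Submodule.map_sup]
      have : (X ⊔ D) ⊔ (D ⊔ Y) = ⊤ := by
        rw [eq_top_iff, ← hXY]
        exact sup_le (le_trans le_sup_left le_sup_left) (le_trans le_sup_right le_sup_right)
      rw [this, Submodule.map_top, Submodule.range_mkQ]
    have h2 := h _ h1
    have h3 := congrArg (Submodule.comap D.mkQ) h2
    rw [Submodule.comap_map_mkQ, Submodule.comap_top, ← sup_assoc, sup_idem] at h3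
    exact h3
  · intro h Z hZ
    set Y := Z.comap D.mkQ with hY
    have hDY : D ≤ Y := by
      intro x hx
      show D.mkQ x ∈ Z
      have hx0 : D.mkQ x = 0 := (Submodule.Quotient.mk_eq_zero D).mpr hx
      rw [hx0]
      exact Z.zero_mem
    have hmapY : Y.map D.mkQ = Z := by
      rw [hY, Submodule.map_comap_eq, Submodule.range_mkQ, top_inf_eq]
    have hmapXD : (X ⊔ D).map D.mkQ = X.map D.mkQ := by
      rw [Submodule.map_sup, map_mkQ_self', sup_bot_eq]
    have hXY : X ⊔ Y = ⊤ := by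
      have h4 : (X ⊔ Y).map D.mkQ = ⊤ := by
        rw [Submodule.map_sup, hmapY, ← hmapXD]
        exact hZ
      have h5 := congrArg (Submodule.comap D.mkQ) h4
      rw [Submodule.comap_map_mkQ, Submodule.comap_top] at h5
      rw [eq_top_iff, ← h5]
      exact sup_le (le_trans hDY le_sup_right) le_rfl
    have hDYtop := h Y hXY
    have hYtop : Y = ⊤ := by
      rw [eq_top_iff, ← hDYtop]
      exact sup_le hDY le_rfl
    rw [← hmapY, hYtop, Submodule.map_top, Submodule.range_mkQ]

lemma smallSub_pair_iff (X D : Submodule R M) :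
    (SmallSub R ((X ⊔ D).map D.mkQ) ∧ SmallSub R ((X ⊔ D).map X.mkQ)) ↔
      ∀ Y, (X ⊔ Y = ⊤ ↔ D ⊔ Y = ⊤) := by
  rw [smallSub_mkQ_iff, sup_comm X D, smallSub_mkQ_iff D X]
  constructor
  · rintro ⟨h1, h2⟩ Y
    exact ⟨h1 Y, h2 Y⟩
  · intro h
    exact ⟨fun Y => (h Y).mp, fun Y => (h Y).mpr⟩

end Aux

theorem stmt0 {R : Type v} [Ring R] {M : Type u} [AddCommGroup M] [Module R M]
    (hH : HSupplemented R M) (hD3 : CondD3 R M) :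
    ∀ D : Submodule R M, IsDirectSummand R D → HSupplemented R ↥D := by
  rintro N ⟨N', hNN'⟩ X
  set A := X.map N.subtype with hAdef
  have hAN : A ≤ N := Submodule.map_subtype_le N X
  obtain ⟨D, hDsum, hsD1, hsD2⟩ := hH A
  have βD : ∀ Y, A ⊔ Y = ⊤ ↔ D ⊔ Y = ⊤ := (smallSub_pair_iff A D).mp ⟨hsD1, hsD2⟩
  obtain ⟨G, hGsum, hsG1, hsG2⟩ := hH (D ⊔ N')
  have βG : ∀ Y, (D ⊔ N') ⊔ Y = ⊤ ↔ G ⊔ Y = ⊤ :=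
    (smallSub_pair_iff (D ⊔ N') G).mp ⟨hsG1, hsG2⟩
  have eqN : ∀ B ≤ N, (B = N ↔ B ⊔ N' = ⊤) := by
    intro B hB
    constructor
    · rintro rfl
      exact codisjoint_iff.mp hNN'.codisjoint
    · intro h
      have h2 : N = B := by
        calc N = (B ⊔ N') ⊓ N := by rw [h, top_inf_eq]
          _ = B ⊔ (N' ⊓ N) := sup_inf_assoc_of_le N' hB
          _ = B := by rw [(hNN'.disjoint.symm).eq_bot, sup_bot_eq]
      exact h2.symm
  have chain : ∀ Y' ≤ N, (A ⊔ Y' = N ↔ G ⊔ Y' = ⊤) := by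
    intro Y' hY'
    rw [eqN (A ⊔ Y') (sup_le hAN hY'), sup_assoc, βD (Y' ⊔ N'),
      show D ⊔ (Y' ⊔ N') = (D ⊔ N') ⊔ Y' by rw [sup_comm Y' N', ← sup_assoc], βG Y']
  have hNG : N ⊔ G = ⊤ := by
    have h := (chain N le_rfl).mp (sup_eq_right.mpr hAN)
    rwa [sup_comm] at h
  obtain ⟨P, hP⟩ := hD3 N G ⟨N', hNN'⟩ hGsum hNG
  have final : ∀ Y' ≤ N, (A ⊔ Y' = N ↔ (N ⊓ G) ⊔ Y' = N) := by
    intro Y' hY'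
    rw [chain Y' hY']
    constructor
    · intro h
      calc (N ⊓ G) ⊔ Y' = N ⊓ (G ⊔ Y') := inf_sup_assoc_of_le G hY'
        _ = N := by rw [h, inf_top_eq]
    · intro h
      have hle : N ≤ G ⊔ Y' := by
        rw [← h]
        exact sup_le (le_trans inf_le_right le_sup_left) le_sup_right
      rw [eq_top_iff, ← hNG]
      exact sup_le hle le_sup_left
  -- set up transfer between submodules of N and submodules of M
  have hinj : Function.Injective N.subtype := N.injective_subtype
  have topIff : ∀ U : Submodule R ↥N, U = ⊤ ↔ U.map N.subtype = N := by
    intro U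
    constructor
    · rintro rfl; exact Submodule.map_subtype_top N
    · intro h
      apply Submodule.map_injective_of_injective hinj
      rw [h, Submodule.map_subtype_top]
  have emapG : ((N ⊓ G).comap N.subtype).map N.subtype = N ⊓ G := by
    rw [Submodule.map_comap_subtype, ← inf_assoc, inf_idem]
  have emapP : ((N ⊓ P).comap N.subtype).map N.subtype = N ⊓ P := by
    rw [Submodule.map_comap_subtype, ← inf_assoc, inf_idem]
  refine ⟨(N ⊓ G).comap N.subtype, ⟨(N ⊓ P).comap N.subtype, ?_, ?_⟩, ?_⟩
  · -- disjointness
    rw [disjoint_iff]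
    apply Submodule.map_injective_of_injective hinj
    rw [Submodule.map_inf N.subtype hinj, emapG, emapP, Submodule.map_bot]
    rw [eq_bot_iff]
    calc (N ⊓ G) ⊓ (N ⊓ P) ≤ (N ⊓ G) ⊓ P := inf_le_inf_left _ inf_le_right
      _ = ⊥ := hP.disjoint.eq_bot
  · -- codisjointness
    rw [codisjoint_iff]
    apply Submodule.map_injective_of_injective hinj
    rw [Submodule.map_sup, emapG, emapP, Submodule.map_subtype_top]
    calc (N ⊓ G) ⊔ (N ⊓ P) = (N ⊓ P) ⊔ (N ⊓ G) := sup_comm _ _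
      _ = N ⊓ (P ⊔ (N ⊓ G)) := inf_sup_assoc_of_le P inf_le_left
      _ = N := by rw [sup_comm P (N ⊓ G), codisjoint_iff.mp hP.codisjoint, inf_top_eq]
  · -- smallness conditions
    apply (smallSub_pair_iff X ((N ⊓ G).comap N.subtype)).mpr
    intro Y₀
    have hmY₀ : Y₀.map N.subtype ≤ N := Submodule.map_subtype_le N Y₀
    rw [topIff (X ⊔ Y₀), topIff ((N ⊓ G).comap N.subtype ⊔ Y₀),
      Submodule.map_sup, Submodule.map_sup, emapG, ← hAdef]
    exact final (Y₀.map N.subtype) hmY₀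
end

section
/- If M is an H-supplemented module satisfying condition (D2), then every direct summand of M is H-supplemented. -/
/-!
Being H-supplemented says that every submodule `X` has the same supplements (`Y` with
`X + Y = M`) as some direct summand `D`. Let `N` be a summand, `X ≤ N`, and `E ⊕ E' = M` with `E`
having the same supplements as `X`. Then `N + E' = M`, and since (D2) implies (D3), `N ∩ E'` is a
summand of `M`. It has a complement `F ⊇ E`, and the modular law shows that the summand `N ∩ F`
of `N` has the same supplements in `N` as `X`.
-/

universe u v

/-- Condition (D2). -/
def CondD2 (R : Type v) [Ring R] (M : Type u) [AddCommGroup M] [Module R M] : Prop :=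
  ∀ N : Submodule R M,
    (∃ D : Submodule R M, IsDirectSummand R D ∧ Nonempty ((M ⧸ N) ≃ₗ[R] ↥D)) →
      IsDirectSummand R N

section Lattice

variable {α : Type*} [Lattice α] [BoundedOrder α]

/-- The relation `β*` on submodules, in its lattice-theoretic form. -/
def BetaStar (a b : α) : Prop :=
  ∀ c, a ⊔ c = ⊤ ↔ b ⊔ c = ⊤

lemma betaStar_iff {a b : α} :
    BetaStar a b ↔
      (∀ c, a ⊔ b ⊔ c = ⊤ → a ⊔ c = ⊤) ∧ (∀ c, a ⊔ b ⊔ c = ⊤ → b ⊔ c = ⊤) := by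
  constructor
  · intro h
    constructor
    · intro c hc
      have := (h (a ⊔ c)).2 (by rwa [sup_left_comm, ← sup_assoc])
      rwa [← sup_assoc, sup_idem] at this
    · intro c hc
      have := (h (b ⊔ c)).1 (by rwa [← sup_assoc])
      rwa [← sup_assoc, sup_idem] at this
  · rintro ⟨ha, hb⟩ c
    exact ⟨fun hc => hb c (top_unique (hc ▸ sup_le_sup_right le_sup_left c)),
      fun hc => ha c (top_unique (hc ▸ sup_le_sup_right le_sup_right c))⟩

variable [IsModularLattice α]

lemma isCompl_sup_inf_of_le {e e' f c : α} (he : IsCompl e e') (hf : IsCompl f c)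
    (hfe : f ≤ e') : IsCompl f (e ⊔ e' ⊓ c) := by
  refine ⟨(Disjoint.disjoint_sup_left_of_disjoint_sup_right
    (hf.disjoint.symm.mono_left inf_le_right)
    (he.disjoint.mono_right (sup_le inf_le_left hfe))).symm, codisjoint_iff.2 ?_⟩
  calc f ⊔ (e ⊔ e' ⊓ c) = e ⊔ (e' ⊓ c ⊔ f) := by rw [sup_comm, sup_assoc]
    _ = e ⊔ e' := by rw [inf_sup_assoc_of_le c hfe, hf.symm.sup_eq_top, inf_top_eq]
    _ = ⊤ := he.sup_eq_top

lemma inf_sup_eq_iff_sup_eq_top {n f z : α} (hz : z ≤ n) (hn : n ⊔ f = ⊤) :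
    n ⊓ f ⊔ z = n ↔ z ⊔ f = ⊤ := by
  constructor
  · intro h
    refine top_unique ?_
    calc ⊤ = n ⊓ f ⊔ z ⊔ f := by rw [h, hn]
      _ ≤ z ⊔ f := sup_le (sup_le (inf_le_right.trans le_sup_right) le_sup_left) le_sup_right
  · intro h
    rw [sup_comm, inf_comm, ← sup_inf_assoc_of_le f hz, h, top_inf_eq]

/-- Inside `n`, a summand `n ⊓ f` of `n` inherits from `e` the supplements of `a`. -/
lemma sup_eq_iff_sup_inf_eq_of_betaStar {a n e e' f z : α} (he : IsCompl e e') (han : a ≤ n)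
    (hae : BetaStar a e) (hef : e ≤ f) (hf : IsCompl (n ⊓ e') f) (hz : z ≤ n) :
    a ⊔ z = n ↔ n ⊓ f ⊔ z = n := by
  have hnf : n ⊔ f = ⊤ := top_unique (hf.sup_eq_top.ge.trans (sup_le_sup_right inf_le_left f))
  rw [inf_sup_eq_iff_sup_eq_top hz hnf]
  constructor
  · intro h
    have := (hae (z ⊔ f)).1 (by rw [← sup_assoc, h, hnf])
    rwa [sup_eq_right.2 (le_sup_of_le_right hef)] at this
  · intro h
    have hsup : e ⊔ (z ⊔ e' ⊓ f) = ⊤ := by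
      rw [sup_left_comm, ← sup_inf_assoc_of_le e' hef, he.sup_eq_top, top_inf_eq, h]
    calc a ⊔ z = a ⊔ z ⊔ e' ⊓ f ⊓ n := by
          rw [inf_right_comm, inf_comm e', hf.inf_eq_bot, sup_bot_eq]
      _ = (a ⊔ z ⊔ e' ⊓ f) ⊓ n := (sup_inf_assoc_of_le _ (sup_le han hz)).symm
      _ = n := by rw [sup_assoc, (hae _).2 hsup, top_inf_eq]

end Lattice

namespace Submodule

variable {R : Type v} [Ring R] {M : Type u} [AddCommGroup M] [Module R M]

lemma smallSub_map_mkQ_iff {p S : Submodule R M} (hp : p ≤ S) :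
    SmallSub R (S.map p.mkQ) ↔ ∀ Y : Submodule R M, S ⊔ Y = ⊤ → p ⊔ Y = ⊤ := by
  constructor
  · intro h Y hY
    exact (map_mkQ_eq_top _ _).1 (h _ (by rw [← map_sup, hY, map_top, range_mkQ]))
  · intro h q hq
    have hq' : (q.comap p.mkQ).map p.mkQ = q := by
      rw [map_comap_eq, range_mkQ, top_inf_eq]
    have hSY : S ⊔ q.comap p.mkQ = ⊤ := by
      rw [← sup_eq_right.2 (hp.trans le_sup_left), ← map_mkQ_eq_top, map_sup, hq', hq]
    rw [← hq']
    exact (map_mkQ_eq_top _ _).2 (h _ hSY)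

lemma betaStar_iff_smallSub {X D : Submodule R M} :
    BetaStar X D ↔ SmallSub R ((X ⊔ D).map D.mkQ) ∧ SmallSub R ((X ⊔ D).map X.mkQ) := by
  rw [betaStar_iff, smallSub_map_mkQ_iff le_sup_right, smallSub_map_mkQ_iff le_sup_left, and_comm]

lemma sup_eq_top_iff_map_subtype {N : Submodule R M} {P Z : Submodule R N} :
    P ⊔ Z = ⊤ ↔ P.map N.subtype ⊔ Z.map N.subtype = N := by
  rw [← map_sup, ← (map_injective_of_injective N.injective_subtype).eq_iff, map_subtype_top]

lemma ker_mkQ_comp_projection {K L L' : Submodule R M} (hL : IsCompl L L') :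
    LinearMap.ker (K.mkQ ∘ₗ L.projection L' hL) = K ⊓ L ⊔ L' := by
  rw [LinearMap.ker_comp, ker_mkQ]
  apply le_antisymm
  · intro m hm
    rw [← projection_add_projection_eq_self hL m]
    exact add_mem_sup ⟨hm, projection_apply_mem hL m⟩ (projection_apply_mem hL.symm m)
  · refine sup_le (fun x hx => ?_) (fun x hx => ?_)
    · simpa [projection_apply_of_mem_left hL hx.2] using hx.1
    · simp [projection_apply_of_mem_right hL hx]

lemma surjective_mkQ_comp_projection {K L L' : Submodule R M} (hL : IsCompl L L')
    (hKL : K ⊔ L = ⊤) : Function.Surjective (K.mkQ ∘ₗ L.projection L' hL) := by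
  rw [← LinearMap.range_eq_top, LinearMap.range_comp, range_projection, map_mkQ_eq_top, hKL]

end Submodule

section DirectSummand

open Submodule

variable {R : Type v} [Ring R] {M : Type u} [AddCommGroup M] [Module R M]

lemma hSupplemented_iff :
    HSupplemented R M ↔ ∀ X : Submodule R M, ∃ D, IsDirectSummand R D ∧ BetaStar X D := by
  simp only [HSupplemented, betaStar_iff_smallSub]

lemma CondD2.isDirectSummand_ker (hD2 : CondD2 R M) {K K' : Submodule R M} (hK : IsCompl K K')
    (f : M →ₗ[R] M ⧸ K) (hf : Function.Surjective f) : IsDirectSummand R (LinearMap.ker f) :=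
  hD2 _ ⟨K', ⟨K, hK.symm⟩, ⟨(f.quotKerEquivOfSurjective hf).trans (quotientEquivOfIsCompl K K' hK)⟩⟩

/-- With `M = L ⊕ L'`, the map `M → L → M/K` has kernel `(K ∩ L) ⊕ L'`, a summand by (D2). -/
lemma CondD2.condD3 (hD2 : CondD2 R M) : CondD3 R M := by
  rintro K L ⟨K', hK⟩ ⟨L', hL⟩ hKL
  obtain ⟨C, hC⟩ : IsDirectSummand R (K ⊓ L ⊔ L') := ker_mkQ_comp_projection hL ▸
    hD2.isDirectSummand_ker hK _ (surjective_mkQ_comp_projection hL hKL)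
  exact ⟨L' ⊔ C, (hL.disjoint.mono_left inf_le_right).isCompl_sup_right_of_isCompl_sup_left hC⟩

end DirectSummand

theorem stmt1 {R : Type v} [Ring R] {M : Type u} [AddCommGroup M] [Module R M]
    (hH : HSupplemented R M) (hD2 : CondD2 R M) :
    ∀ D : Submodule R M, IsDirectSummand R D → HSupplemented R ↥D := by
  intro N hN
  rw [hSupplemented_iff] at hH ⊢
  intro X
  have hXN : X.map N.subtype ≤ N := Submodule.map_subtype_le N X
  obtain ⟨E, ⟨E', hE⟩, hXE⟩ := hH (X.map N.subtype)
  have hNE' : N ⊔ E' = ⊤ :=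
    top_unique (((hXE E').2 hE.sup_eq_top).ge.trans (sup_le_sup_right hXN E'))
  obtain ⟨C, hC⟩ := hD2.condD3 N E' hN ⟨E, hE.symm⟩ hNE'
  have hF : IsCompl (N ⊓ E') (E ⊔ E' ⊓ C) := isCompl_sup_inf_of_le hE hC inf_le_right
  refine ⟨(E ⊔ E' ⊓ C).comap N.subtype,
    ⟨_, (Submodule.isCompl_comap_subtype_of_isCompl_of_le hF inf_le_left).symm⟩, fun Z => ?_⟩
  rw [Submodule.sup_eq_top_iff_map_subtype, Submodule.sup_eq_top_iff_map_subtype,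
    Submodule.map_comap_subtype]
  exact sup_eq_iff_sup_inf_eq_of_betaStar hE hXN hXE le_sup_left hF (Submodule.map_subtype_le N Z)
end

section
/- A module M is H-supplemented if and only if for every submodule A of M there exists a direct summand A' of M such that for every submodule X of M, A + X = M holds if and only if A' + X = M. -/
universe u v

/-! By the correspondence theorem, `(A + D)/D ≪ M/D` says exactly that every `X` with
`A + X = M` also satisfies `D + X = M`; symmetrically for `(A + D)/A ≪ M/A`. So the two
smallness conditions on the direct summand `D` amount to `A + X = M ↔ D + X = M` for all `X`. -/

theorem forall_le_sup_eq_top_imp_iff {α : Type*} [Lattice α] [OrderTop α] (a d : α) :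
    (∀ x, d ≤ x → a ⊔ x = ⊤ → x = ⊤) ↔ ∀ x, a ⊔ x = ⊤ → d ⊔ x = ⊤ := by
  constructor
  · intro h x hax
    exact h (d ⊔ x) le_sup_left (eq_top_mono (sup_le_sup_left le_sup_right a) hax)
  · intro h x hdx hax
    simpa only [sup_eq_right.mpr hdx] using h x hax

section Module

variable {R : Type v} [Ring R] {M : Type u} [AddCommGroup M] [Module R M]

theorem smallSub_map_mkQ_iff (N D : Submodule R M) :
    SmallSub R (N.map D.mkQ) ↔ ∀ X : Submodule R M, D ≤ X → N ⊔ X = ⊤ → X = ⊤ := by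
  constructor
  · intro h X hDX hNX
    have hX : X.map D.mkQ = ⊤ :=
      h _ (by rw [← Submodule.map_sup, hNX, Submodule.map_top, Submodule.range_mkQ])
    rw [← sup_eq_right.mpr hDX, ← Submodule.comap_map_mkQ, hX, Submodule.comap_top]
  · intro h Y hNY
    have hY : (Y.comap D.mkQ).map D.mkQ = Y :=
      Submodule.map_comap_eq_of_surjective D.mkQ_surjective Y
    have hDY : D ≤ Y.comap D.mkQ := by
      simpa only [Submodule.ker_mkQ] using LinearMap.ker_le_comap D.mkQ (p := Y)
    have hNX : N ⊔ Y.comap D.mkQ = ⊤ := by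
      rw [← sup_eq_right.mpr (le_sup_of_le_right hDY : D ≤ N ⊔ Y.comap D.mkQ),
        ← Submodule.comap_map_mkQ, Submodule.map_sup, hY, hNY, Submodule.comap_top]
    rw [← hY, h _ hDY hNX, Submodule.map_top, Submodule.range_mkQ]

theorem smallSub_map_mkQ_sup_iff (A D : Submodule R M) :
    SmallSub R ((A ⊔ D).map D.mkQ) ↔ ∀ X : Submodule R M, A ⊔ X = ⊤ → D ⊔ X = ⊤ := by
  rw [smallSub_map_mkQ_iff, ← forall_le_sup_eq_top_imp_iff]
  refine forall_congr' fun X => forall_congr' fun hDX => ?_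
  rw [sup_assoc, sup_eq_right.mpr hDX]

end Module

theorem stmt2 {R : Type v} [Ring R] {M : Type u} [AddCommGroup M] [Module R M] :
    HSupplemented R M ↔
      ∀ A : Submodule R M, ∃ A' : Submodule R M, IsDirectSummand R A' ∧
        ∀ X : Submodule R M, (A ⊔ X = ⊤ ↔ A' ⊔ X = ⊤) := by
  refine forall_congr' fun A => exists_congr fun D => and_congr_right fun _ => ?_
  rw [smallSub_map_mkQ_sup_iff, sup_comm A D, smallSub_map_mkQ_sup_iff, ← forall_and]
  exact forall_congr' fun X => iff_iff_implies_and_implies.symm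
end

section
/- If M is an extending UC module (every submodule has a unique closure), then M is H-supplemented if and only if every direct summand of M is H-supplemented. -/
universe u v

/-- `N` is essential in the submodule `C` (both submodules of `M`, `N ≤ C`). -/
def EssIn (R : Type v) [Ring R] {M : Type u} [AddCommGroup M] [Module R M]
    (N C : Submodule R M) : Prop :=
  N ≤ C ∧ ∀ X : Submodule R M, X ≤ C → N ⊓ X = ⊥ → X = ⊥

/-- `C` is a closed submodule of `M`: it has no proper essential extension in `M`. -/
def ClosedSub (R : Type v) [Ring R] {M : Type u} [AddCommGroup M] [Module R M]
    (C : Submodule R M) : Prop :=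
  ∀ X : Submodule R M, EssIn R C X → X = C

/-- `C` is a closure of `N` in `M`. -/
def IsClosure (R : Type v) [Ring R] {M : Type u} [AddCommGroup M] [Module R M]
    (N C : Submodule R M) : Prop :=
  EssIn R N C ∧ ClosedSub R C

/-- `M` is a UC module: every submodule has a unique closure. -/
def UCModule (R : Type v) [Ring R] (M : Type u) [AddCommGroup M] [Module R M] : Prop :=
  ∀ N : Submodule R M, ∃! C : Submodule R M, IsClosure R N C

/-- `M` is extending: every submodule is essential in a direct summand. -/
def Extending (R : Type v) [Ring R] (M : Type u) [AddCommGroup M] [Module R M] : Prop :=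
  ∀ N : Submodule R M, ∃ D : Submodule R M, IsDirectSummand R D ∧ EssIn R N D

section Aux

variable {R : Type v} [Ring R] {M : Type u} [AddCommGroup M] [Module R M]

/-- Smallness of the image of `S` in `M/D` as a lattice condition in `M`. -/
lemma smallSub_map_mkQ (S D : Submodule R M) :
    SmallSub R (S.map D.mkQ) ↔ ∀ Y : Submodule R M, D ≤ Y → S ⊔ Y = ⊤ → Y = ⊤ := by
  constructor
  · intro h Y hDY hSY
    have h1 : S.map D.mkQ ⊔ Y.map D.mkQ = ⊤ := by
      rw [← Submodule.map_sup, hSY, Submodule.map_top, Submodule.range_mkQ]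
    have h2 := h _ h1
    have h3 : D ⊔ Y = ⊤ := (Submodule.map_mkQ_eq_top D Y).mp h2
    rwa [sup_eq_right.mpr hDY] at h3
  · intro h T hT
    set Y := T.comap D.mkQ with hY
    have hDY : D ≤ Y := by
      intro x hx
      have hx0 : D.mkQ x = 0 := (Submodule.Quotient.mk_eq_zero D).2 hx
      simp only [hY, Submodule.mem_comap, hx0]
      exact T.zero_mem
    have hmap : Y.map D.mkQ = T := by
      rw [hY, Submodule.map_comap_eq, Submodule.range_mkQ, top_inf_eq]
    have hSY : S ⊔ Y = ⊤ := by
      have h4 : (S ⊔ Y).map D.mkQ = ⊤ := by rw [Submodule.map_sup, hmap, hT]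
      have h5 := (Submodule.map_mkQ_eq_top D (S ⊔ Y)).mp h4
      have h6 : D ≤ S ⊔ Y := le_trans hDY le_sup_right
      rwa [sup_eq_right.mpr h6] at h5
    have h7 := h Y hDY hSY
    rw [← hmap, h7, Submodule.map_top, Submodule.range_mkQ]

/-- The co-equivalence characterization of H-supplemented. -/
lemma hsupp_iff_coeq :
    HSupplemented R M ↔ ∀ X : Submodule R M, ∃ D : Submodule R M, IsDirectSummand R D ∧
      ∀ Y : Submodule R M, (X ⊔ Y = ⊤ ↔ D ⊔ Y = ⊤) := by
  constructor
  · intro h X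
    obtain ⟨D, hD, h1, h2⟩ := h X
    rw [smallSub_map_mkQ] at h1 h2
    refine ⟨D, hD, fun Y => ⟨fun hXY => ?_, fun hDY => ?_⟩⟩
    · refine h1 (D ⊔ Y) le_sup_left ?_
      rw [eq_top_iff, ← hXY]
      exact sup_le (le_trans le_sup_left le_sup_left)
        (le_trans (le_sup_right : Y ≤ D ⊔ Y) le_sup_right)
    · refine h2 (X ⊔ Y) le_sup_left ?_
      rw [eq_top_iff, ← hDY]
      exact sup_le (le_trans le_sup_right le_sup_left) (le_trans le_sup_right le_sup_right)
  · intro h X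
    obtain ⟨D, hD, hco⟩ := h X
    refine ⟨D, hD, ?_, ?_⟩
    · rw [smallSub_map_mkQ]
      intro Y hDY hXY
      have h1 : X ⊔ Y = ⊤ := by
        rw [sup_assoc, sup_eq_right.mpr hDY] at hXY; exact hXY
      have h2 : D ⊔ Y = ⊤ := (hco Y).mp h1
      rwa [sup_eq_right.mpr hDY] at h2
    · rw [smallSub_map_mkQ]
      intro Y hXY hDY
      have h1 : D ⊔ Y = ⊤ := by
        rw [sup_comm X D, sup_assoc, sup_eq_right.mpr hXY] at hDY; exact hDY
      have h2 : X ⊔ Y = ⊤ := (hco Y).mpr h1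
      rwa [sup_eq_right.mpr hXY] at h2

/-- Transfer of H-supplementedness of a submodule to the lattice of `M`. -/
lemma hsupp_sub_iff (M₁ : Submodule R M) :
    HSupplemented R ↥M₁ ↔ ∀ N : Submodule R M, N ≤ M₁ → ∃ D₁ C : Submodule R M,
      D₁ ≤ M₁ ∧ C ≤ M₁ ∧ D₁ ⊓ C = ⊥ ∧ D₁ ⊔ C = M₁ ∧
      ∀ Y : Submodule R M, Y ≤ M₁ → (N ⊔ Y = M₁ ↔ D₁ ⊔ Y = M₁) := by
  have hinj : Function.Injective (Submodule.map M₁.subtype) :=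
    Submodule.map_injective_of_injective M₁.injective_subtype
  have hφtop : (⊤ : Submodule R ↥M₁).map M₁.subtype = M₁ := Submodule.map_subtype_top M₁
  have hφeq : ∀ {N : Submodule R M}, N ≤ M₁ → (N.comap M₁.subtype).map M₁.subtype = N := by
    intro N hN
    rw [Submodule.map_comap_subtype]
    exact inf_eq_right.mpr hN
  rw [hsupp_iff_coeq]
  constructor
  · intro h N hN
    obtain ⟨D, ⟨D', hD⟩, hco⟩ := h (N.comap M₁.subtype)
    refine ⟨D.map M₁.subtype, D'.map M₁.subtype, Submodule.map_subtype_le _ _,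
      Submodule.map_subtype_le _ _, ?_, ?_, ?_⟩
    · rw [← Submodule.map_inf _ M₁.injective_subtype, disjoint_iff.mp hD.disjoint,
        Submodule.map_bot]
    · rw [← Submodule.map_sup, codisjoint_iff.mp hD.codisjoint, hφtop]
    · intro Y hY
      have key := hco (Y.comap M₁.subtype)
      constructor
      · intro hNY
        have h1 : N.comap M₁.subtype ⊔ Y.comap M₁.subtype = ⊤ := by
          apply hinj
          rw [Submodule.map_sup, hφeq hN, hφeq hY, hφtop, hNY]
        have h2 := key.mp h1
        rw [show D.map M₁.subtype ⊔ Y = (D ⊔ Y.comap M₁.subtype).map M₁.subtype from by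
          rw [Submodule.map_sup, hφeq hY], h2, hφtop]
      · intro hDY
        have h1 : D ⊔ Y.comap M₁.subtype = ⊤ := by
          apply hinj
          rw [Submodule.map_sup, hφeq hY, hφtop, hDY]
        have h2 := key.mpr h1
        rw [show N ⊔ Y = (N.comap M₁.subtype ⊔ Y.comap M₁.subtype).map M₁.subtype from by
          rw [Submodule.map_sup, hφeq hN, hφeq hY], h2, hφtop]
  · intro h X
    obtain ⟨D₁, C, hD₁, hC, hbot, htop, hiff⟩ := h (X.map M₁.subtype)
      (Submodule.map_subtype_le _ _)
    refine ⟨D₁.comap M₁.subtype, ⟨C.comap M₁.subtype, ⟨?_, ?_⟩⟩, ?_⟩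
    · rw [disjoint_iff]
      apply hinj
      rw [Submodule.map_inf _ M₁.injective_subtype, hφeq hD₁, hφeq hC, hbot, Submodule.map_bot]
    · rw [codisjoint_iff]
      apply hinj
      rw [Submodule.map_sup, hφeq hD₁, hφeq hC, htop, hφtop]
    · intro Y
      have key := hiff (Y.map M₁.subtype) (Submodule.map_subtype_le _ _)
      constructor
      · intro hXY
        apply hinj
        rw [Submodule.map_sup, hφeq hD₁, hφtop]
        apply key.mp
        rw [← Submodule.map_sup, hXY, hφtop]
      · intro hDY
        apply hinj
        rw [Submodule.map_sup, hφtop]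
        apply key.mpr
        rw [show D₁ ⊔ Y.map M₁.subtype = (D₁.comap M₁.subtype ⊔ Y).map M₁.subtype from by
          rw [Submodule.map_sup, hφeq hD₁], hDY, hφtop]

lemma essIn_refl (A : Submodule R M) : EssIn R A A :=
  ⟨le_rfl, fun X hX h0 => by rwa [inf_eq_right.mpr hX] at h0⟩

lemma essIn_trans {A B C : Submodule R M} (h1 : EssIn R A B) (h2 : EssIn R B C) :
    EssIn R A C := by
  refine ⟨le_trans h1.1 h2.1, fun X hX h0 => ?_⟩
  have hXB : X ⊓ B = ⊥ := by
    refine h1.2 (X ⊓ B) inf_le_right ?_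
    rw [eq_bot_iff, ← h0]
    exact le_inf inf_le_left (le_trans inf_le_right inf_le_left)
  refine h2.2 X hX ?_
  rw [eq_bot_iff, ← hXB]
  exact le_inf inf_le_right inf_le_left

/-- Existence of a maximal essential extension of `A` inside `K` (a closure in `K`). -/
lemma exists_closure_in (K A : Submodule R M) (hAK : A ≤ K) :
    ∃ B : Submodule R M, B ≤ K ∧ EssIn R A B ∧
      ∀ B' : Submodule R M, B' ≤ K → EssIn R B B' → B' = B := by
  set s : Set (Submodule R M) := {B | B ≤ K ∧ EssIn R A B}
  have hAs : A ∈ s := ⟨hAK, essIn_refl A⟩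
  have hchainub : ∀ c ⊆ s, IsChain (· ≤ ·) c → ∀ y ∈ c, ∃ ub ∈ s, ∀ z ∈ c, z ≤ ub := by
    intro c hcs hchain y hy
    refine ⟨sSup c, ⟨sSup_le fun z hz => (hcs hz).1, le_trans (hcs hy).2.1 (le_sSup hy), ?_⟩,
      fun z hz => le_sSup hz⟩
    intro X hX h0
    rw [eq_bot_iff]
    intro x hx
    obtain ⟨B₀, hB₀c, hxB₀⟩ := (Submodule.mem_sSup_of_directed ⟨y, hy⟩ hchain.directedOn).1
      (hX hx)
    have hspan : Submodule.span R {x} = ⊥ := by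
      refine (hcs hB₀c).2.2 (Submodule.span R {x}) ?_ ?_
      · rwa [Submodule.span_singleton_le_iff_mem]
      · rw [eq_bot_iff, ← h0]
        refine le_inf inf_le_left (le_trans inf_le_right ?_)
        rwa [Submodule.span_singleton_le_iff_mem]
    have hxs : x ∈ Submodule.span R {x} := Submodule.mem_span_singleton_self x
    rw [hspan] at hxs
    exact hxs
  obtain ⟨m, hAm, hmax⟩ := zorn_le_nonempty₀ s hchainub A hAs
  refine ⟨m, hmax.prop.1, hmax.prop.2, fun B' hB'K hess => ?_⟩
  have hB's : B' ∈ s := ⟨hB'K, essIn_trans hmax.prop.2 hess⟩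
  exact le_antisymm (hmax.2 hB's hess.1) hess.1

/-- A submodule of a direct summand `K` with no proper essential extension inside `K`
is closed in `M`. -/
lemma closed_of_closed_in_summand {K B : Submodule R M} (hK : IsDirectSummand R K)
    (hBK : B ≤ K) (hcl : ∀ B' : Submodule R M, B' ≤ K → EssIn R B B' → B' = B) :
    ClosedSub R B := by
  obtain ⟨K', hKc⟩ := hK
  have hKK'bot : K ⊓ K' = ⊥ := disjoint_iff.mp hKc.disjoint
  have hKK'top : K ⊔ K' = ⊤ := codisjoint_iff.mp hKc.codisjoint
  intro X hX
  have hXK' : X ⊓ K' = ⊥ := by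
    refine hX.2 (X ⊓ K') inf_le_left ?_
    rw [eq_bot_iff]
    rintro x hx
    have : x ∈ K ⊓ K' := ⟨hBK hx.1, hx.2.2⟩
    rw [hKK'bot] at this
    exact this
  set P := (X ⊔ K') ⊓ K with hP
  have hBP : B ≤ P := le_inf (le_trans hX.1 le_sup_left) hBK
  have hessBP : EssIn R B P := by
    refine ⟨hBP, fun S hSP hBS => ?_⟩
    have hSK : S ≤ K := le_trans hSP inf_le_right
    set T := X ⊓ (S ⊔ K') with hT
    have hBT : B ⊓ T = ⊥ := by
      rw [eq_bot_iff]
      rintro b hb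
      obtain ⟨hbB, hbX, hbSK'⟩ : b ∈ B ∧ b ∈ X ∧ b ∈ S ⊔ K' :=
        ⟨hb.1, hb.2.1, hb.2.2⟩
      obtain ⟨sv, hs, kv, hk, hsum⟩ := Submodule.mem_sup.mp hbSK'
      have hkK : kv ∈ K := by
        have : kv = b - sv := by rw [← hsum]; abel
        rw [this]
        exact sub_mem (hBK hbB) (hSK hs)
      have hkbot : kv ∈ K ⊓ K' := ⟨hkK, hk⟩
      rw [hKK'bot] at hkbot
      have hbs : b = sv := by
        rw [← hsum, (Submodule.mem_bot R).mp hkbot, add_zero]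
      have : b ∈ B ⊓ S := ⟨hbB, hbs ▸ hs⟩
      rw [hBS] at this
      exact this
    have hTbot : T = ⊥ := hX.2 T inf_le_left hBT
    rw [eq_bot_iff]
    intro sv hsv
    have hsvK : sv ∈ K := hSP hsv |>.2
    have hsvXK' : sv ∈ X ⊔ K' := (hSP hsv).1
    obtain ⟨xv, hxv, kv, hkv, hsum⟩ := Submodule.mem_sup.mp hsvXK'
    have hxvT : xv ∈ T := by
      refine ⟨hxv, ?_⟩
      have : xv = sv - kv := by rw [← hsum]; abel
      rw [this]
      exact sub_mem (Submodule.mem_sup_left hsv) (Submodule.mem_sup_right hkv)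
    rw [hTbot] at hxvT
    have hxv0 : xv = 0 := (Submodule.mem_bot R).mp hxvT
    have : sv ∈ K ⊓ K' := ⟨hsvK, by rw [← hsum, hxv0, zero_add]; exact hkv⟩
    rw [hKK'bot] at this
    exact this
  have hPB : P = B := hcl P inf_le_right hessBP
  refine le_antisymm ?_ hX.1
  intro x hx
  have hxT : x ∈ K ⊔ K' := by rw [hKK'top]; exact Submodule.mem_top
  obtain ⟨k, hk, k', hk', hsum⟩ := Submodule.mem_sup.mp hxT
  have hkP : k ∈ P := by
    refine ⟨?_, hk⟩
    have : k = x - k' := by rw [← hsum]; abel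
    rw [this]
    exact sub_mem (Submodule.mem_sup_left hx) (Submodule.mem_sup_right hk')
  rw [hPB] at hkP
  have hk'0 : k' ∈ X ⊓ K' := by
    refine ⟨?_, hk'⟩
    have : k' = x - k := by rw [← hsum]; abel
    rw [this]
    exact sub_mem hx (hX.1 hkP)
  rw [hXK'] at hk'0
  have : x = k := by rw [← hsum, (Submodule.mem_bot R).mp hk'0, add_zero]
  rw [this]
  exact hkP

/-- In a UC extending module, the intersection of two direct summands is a direct summand. -/
lemma sip (hext : Extending R M) (huc : UCModule R M) {K L : Submodule R M}
    (hK : IsDirectSummand R K) (hL : IsDirectSummand R L) :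
    IsDirectSummand R (K ⊓ L) := by
  set A := K ⊓ L with hA
  obtain ⟨B₁, hB₁K, hessB₁, hmax₁⟩ := exists_closure_in K A inf_le_left
  obtain ⟨B₂, hB₂L, hessB₂, hmax₂⟩ := exists_closure_in L A inf_le_right
  have hcl₁ : ClosedSub R B₁ := closed_of_closed_in_summand hK hB₁K hmax₁
  have hcl₂ : ClosedSub R B₂ := closed_of_closed_in_summand hL hB₂L hmax₂
  obtain ⟨C, -, huniq⟩ := huc A
  have h12 : B₁ = B₂ := by
    rw [huniq B₁ ⟨hessB₁, hcl₁⟩, huniq B₂ ⟨hessB₂, hcl₂⟩]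
  have hBA : B₁ = A := le_antisymm (le_inf hB₁K (h12 ▸ hB₂L)) hessB₁.1
  have hclA : ClosedSub R A := hBA ▸ hcl₁
  obtain ⟨D, hD, hAD⟩ := hext A
  have hDA : D = A := hclA D hAD
  exact hDA ▸ hD

lemma eq_of_sup_compl_top {W M₁ D'' : Submodule R M} (hW : W ≤ M₁)
    (hbot : M₁ ⊓ D'' = ⊥) (h : W ⊔ D'' = ⊤) : W = M₁ := by
  have hmod := sup_inf_assoc_of_le D'' hW
  rw [h, top_inf_eq, inf_comm D'' M₁, hbot, sup_bot_eq] at hmod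
  exact hmod.symm

/-- The key lemma: in a UC extending H-supplemented module every direct summand
satisfies the relative H-supplemented condition. -/
lemma key_lemma (hext : Extending R M) (huc : UCModule R M)
    (hH : ∀ X : Submodule R M, ∃ D : Submodule R M, IsDirectSummand R D ∧
      ∀ Y : Submodule R M, (X ⊔ Y = ⊤ ↔ D ⊔ Y = ⊤))
    {M₁ M₂ : Submodule R M} (hc : IsCompl M₁ M₂) :
    ∀ N : Submodule R M, N ≤ M₁ → ∃ D₁ C : Submodule R M,
      D₁ ≤ M₁ ∧ C ≤ M₁ ∧ D₁ ⊓ C = ⊥ ∧ D₁ ⊔ C = M₁ ∧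
      ∀ Y : Submodule R M, Y ≤ M₁ → (N ⊔ Y = M₁ ↔ D₁ ⊔ Y = M₁) := by
  intro N hN
  obtain ⟨D, ⟨D', hDc⟩, hco⟩ := hH N
  have hDD'top : D ⊔ D' = ⊤ := codisjoint_iff.mp hDc.codisjoint
  have hDD'bot : D ⊓ D' = ⊥ := disjoint_iff.mp hDc.disjoint
  have hND' : N ⊔ D' = ⊤ := (hco D').mpr hDD'top
  have hM₁D' : M₁ ⊔ D' = ⊤ :=
    eq_top_iff.mpr (le_trans hND'.ge (sup_le_sup_right hN D'))
  set C := M₁ ⊓ D' with hCdef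
  have hCsummand : IsDirectSummand R C := sip hext huc ⟨M₂, hc⟩ ⟨D, hDc.symm⟩
  obtain ⟨F, hFc⟩ := hCsummand
  have hCFtop : C ⊔ F = ⊤ := codisjoint_iff.mp hFc.codisjoint
  have hCFbot : C ⊓ F = ⊥ := disjoint_iff.mp hFc.disjoint
  set D'' := F ⊓ D' with hD''def
  have hCD' : C ≤ D' := inf_le_right
  have hCM₁ : C ≤ M₁ := inf_le_left
  have hD'dec : D' = C ⊔ D'' := by
    have hmod := sup_inf_assoc_of_le F hCD'
    rw [hCFtop, top_inf_eq] at hmod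
    exact hmod
  have hD''D' : D'' ≤ D' := inf_le_right
  have hM₁D''bot : M₁ ⊓ D'' = ⊥ := by
    rw [eq_bot_iff]
    rintro x ⟨hxM₁, hxF, hxD'⟩
    have : x ∈ C ⊓ F := ⟨⟨hxM₁, hxD'⟩, hxF⟩
    rw [hCFbot] at this
    exact this
  have hM₁D''top : M₁ ⊔ D'' = ⊤ := by
    rw [← hM₁D', hD'dec, ← sup_assoc, sup_eq_left.mpr hCM₁]
  have hDD''Cbot : (D ⊔ D'') ⊓ C = ⊥ := by
    rw [eq_bot_iff]
    rintro x ⟨hxDD, hxC⟩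
    obtain ⟨d, hd, d'', hd'', hsum⟩ := Submodule.mem_sup.mp hxDD
    have hdD' : d ∈ D' := by
      have : d = x - d'' := by rw [← hsum]; abel
      rw [this]
      exact sub_mem (hCD' hxC) (hD''D' hd'')
    have hd0 : d = 0 := by
      have : d ∈ D ⊓ D' := ⟨hd, hdD'⟩
      rw [hDD'bot] at this
      exact (Submodule.mem_bot R).mp this
    have hxD'' : x ∈ D'' := by rw [← hsum, hd0, zero_add]; exact hd''
    have : x ∈ C ⊓ F := ⟨hxC, hxD''.1⟩
    rw [hCFbot] at this
    exact this
  have hDD''Ctop : (D ⊔ D'') ⊔ C = ⊤ := by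
    rw [sup_assoc, sup_comm D'' C, ← hD'dec, hDD'top]
  set D₁ := (D ⊔ D'') ⊓ M₁ with hD₁def
  have hD₁M₁ : D₁ ≤ M₁ := inf_le_right
  have hD₁Csup : D₁ ⊔ C = M₁ := by
    have hmod := sup_inf_assoc_of_le (D ⊔ D'') hCM₁
    rw [sup_comm C (D ⊔ D''), hDD''Ctop, top_inf_eq] at hmod
    rw [sup_comm D₁ C, hD₁def, inf_comm (D ⊔ D'') M₁]
    rw [inf_comm M₁ (D ⊔ D'')]
    exact hmod.symm
  have hD₁Cbot : D₁ ⊓ C = ⊥ := by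
    rw [eq_bot_iff, ← hDD''Cbot]
    exact inf_le_inf_right C inf_le_left
  have hD₁D'' : D₁ ⊔ D'' = D ⊔ D'' := by
    have hmod := inf_sup_assoc_of_le M₁ (le_sup_right : D'' ≤ D ⊔ D'')
    rw [hM₁D''top, inf_top_eq] at hmod
    rw [hD₁def]
    exact hmod
  refine ⟨D₁, C, hD₁M₁, hCM₁, hD₁Cbot, hD₁Csup, ?_⟩
  intro Y hY
  constructor
  · intro hNY
    have h1 : N ⊔ (Y ⊔ D'') = ⊤ := by
      rw [← sup_assoc, hNY, hM₁D''top]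
    have h2 : D ⊔ (Y ⊔ D'') = ⊤ := (hco (Y ⊔ D'')).mp h1
    have h3 : (D₁ ⊔ Y) ⊔ D'' = ⊤ := by
      rw [eq_top_iff, ← h2]
      refine sup_le ?_ (sup_le ?_ ?_)
      · exact le_trans (le_trans le_sup_left hD₁D''.ge)
          (sup_le (le_trans le_sup_left le_sup_left) le_sup_right)
      · exact le_trans le_sup_right le_sup_left
      · exact le_sup_right
    exact eq_of_sup_compl_top (sup_le hD₁M₁ hY) hM₁D''bot h3
  · intro hD₁Y
    have h1 : (D₁ ⊔ Y) ⊔ D'' = ⊤ := by rw [hD₁Y, hM₁D''top]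
    have h2 : D ⊔ (Y ⊔ D'') = ⊤ := by
      rw [eq_top_iff, ← h1]
      refine sup_le (sup_le ?_ ?_) ?_
      · exact le_trans (le_trans inf_le_left (le_refl (D ⊔ D'')))
          (sup_le le_sup_left (le_trans le_sup_right le_sup_right))
      · exact le_trans le_sup_left le_sup_right
      · exact le_trans le_sup_right le_sup_right
    have h3 : N ⊔ (Y ⊔ D'') = ⊤ := (hco (Y ⊔ D'')).mpr h2
    have h4 : (N ⊔ Y) ⊔ D'' = ⊤ := by rw [sup_assoc]; exact h3
    exact eq_of_sup_compl_top (sup_le hN hY) hM₁D''bot h4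

end Aux

theorem stmt3 {R : Type v} [Ring R] {M : Type u} [AddCommGroup M] [Module R M]
    (hext : Extending R M) (huc : UCModule R M) :
    HSupplemented R M ↔
      ∀ D : Submodule R M, IsDirectSummand R D → HSupplemented R ↥D := by
  constructor
  · intro hH D hD
    obtain ⟨D', hc⟩ := hD
    rw [hsupp_sub_iff]
    exact key_lemma hext huc (hsupp_iff_coeq.mp hH) hc
  · intro h
    have h1 := h ⊤ ⟨⊥, isCompl_top_bot⟩
    rw [hsupp_sub_iff] at h1
    rw [hsupp_iff_coeq]
    intro X
    obtain ⟨D₁, C, -, -, hbot, htop, hiff⟩ := h1 X le_top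
    refine ⟨D₁, ⟨C, ⟨disjoint_iff.mpr hbot, codisjoint_iff.mpr htop⟩⟩, fun Y => hiff Y le_top⟩
end

section
/- In an extending UC module M, the intersection of any two direct summands K, L with K + L = M is a direct summand of M; that is, M satisfies (D3). -/
universe u v

/-- `M` is extending (closed-submodule form): every closed submodule is a direct summand. -/
def ExtendingClosed (R : Type v) [Ring R] (M : Type u) [AddCommGroup M] [Module R M] : Prop :=
  ∀ C : Submodule R M, ClosedSub R C → IsDirectSummand R C

/-!
Let `K`, `L` be direct summands and `C` the closure of `K ∩ L`. If `π` is the projection onto `K`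
along a complement `K'`, then `K ∩ L` is still essential in `π(C)`, so by uniqueness of closures
`π(C) ≤ C`; hence `c - π c ∈ C ∩ K' = 0` for `c ∈ C`, i.e. `C ≤ K`. Likewise `C ≤ L`, so `K ∩ L = C`
is closed, and an extending module makes it a direct summand.
-/

section

variable {R : Type v} [Ring R] {M : Type u} [AddCommGroup M] [Module R M]

lemma EssIn.inf_eq_bot {A C B : Submodule R M} (hAC : EssIn R A C) (hAB : A ⊓ B = ⊥) :
    C ⊓ B = ⊥ :=
  hAC.2 (C ⊓ B) inf_le_left (by rw [← inf_assoc, inf_eq_left.mpr hAC.1, hAB])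

lemma EssIn.trans {A B C : Submodule R M} (hAB : EssIn R A B) (hBC : EssIn R B C) :
    EssIn R A C :=
  ⟨hAB.1.trans hBC.1, fun X hXC hAX => hBC.2 X hXC (hAB.inf_eq_bot hAX)⟩

lemma EssIn.map_of_forall_apply_eq {A C : Submodule R M} (hAC : EssIn R A C)
    (f : M →ₗ[R] M) (hf : ∀ a ∈ A, f a = a) : EssIn R A (C.map f) := by
  refine ⟨fun a ha => ⟨a, hAC.1 ha, hf a ha⟩, fun X hX hAX => ?_⟩
  have hpre : C ⊓ X.comap f = ⊥ := by
    refine hAC.2 _ inf_le_left (eq_bot_iff.mpr fun a ⟨haA, _, hfa⟩ => ?_)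
    rw [← hAX]
    exact ⟨haA, hf a haA ▸ hfa⟩
  refine eq_bot_iff.mpr fun x hx => ?_
  obtain ⟨c, hc, rfl⟩ := hX hx
  have hc0 : c ∈ C ⊓ X.comap f := ⟨hc, hx⟩
  rw [hpre, Submodule.mem_bot] at hc0
  simp [hc0]

lemma UCModule.le_of_isClosure_of_essIn (huc : UCModule R M) {A C Y : Submodule R M}
    (hC : IsClosure R A C) (hY : EssIn R A Y) : Y ≤ C := by
  obtain ⟨G, hG, -⟩ := huc Y
  obtain ⟨_, -, huniq⟩ := huc A
  have hGC : G = C := (huniq G ⟨hY.trans hG.1, hG.2⟩).trans (huniq C hC).symm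
  exact hGC ▸ hG.1.1

lemma UCModule.le_of_isClosure_of_isDirectSummand (huc : UCModule R M) {K A C : Submodule R M}
    (hK : IsDirectSummand R K) (hAK : A ≤ K) (hC : IsClosure R A C) : C ≤ K := by
  obtain ⟨K', hKK'⟩ := hK
  set π := K.projection K' hKK'
  have hπC : C.map π ≤ C := huc.le_of_isClosure_of_essIn hC <|
    hC.1.map_of_forall_apply_eq π fun a ha => Submodule.projection_apply_of_mem_left hKK' (hAK ha)
  have hCK' : C ⊓ K' = ⊥ :=
    hC.1.inf_eq_bot (eq_bot_iff.mpr ((inf_le_inf_right K' hAK).trans hKK'.inf_eq_bot.le))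
  intro c hc
  have hdiff : c - π c ∈ C ⊓ K' :=
    ⟨sub_mem hc (hπC ⟨c, hc, rfl⟩), Submodule.sub_projection_mem hKK' c⟩
  rw [hCK', Submodule.mem_bot, sub_eq_zero] at hdiff
  exact hdiff ▸ Submodule.projection_apply_mem hKK' c

lemma UCModule.closedSub_inf_of_isDirectSummand (huc : UCModule R M) {K L : Submodule R M}
    (hK : IsDirectSummand R K) (hL : IsDirectSummand R L) : ClosedSub R (K ⊓ L) := by
  obtain ⟨C, hC, -⟩ := huc (K ⊓ L)
  have hCKL : C = K ⊓ L := le_antisymm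
    (le_inf (huc.le_of_isClosure_of_isDirectSummand hK inf_le_left hC)
      (huc.le_of_isClosure_of_isDirectSummand hL inf_le_right hC))
    hC.1.1
  exact hCKL ▸ hC.2

end

theorem stmt4 {R : Type v} [Ring R] {M : Type u} [AddCommGroup M] [Module R M]
    (hext : ExtendingClosed R M) (huc : UCModule R M) : CondD3 R M := by
  intro K L hK hL _
  exact hext _ (huc.closedSub_inf_of_isDirectSummand hK hL)
end

section
/- If M is a quasi-injective polyform module, then for each natural number n, M^n is H-supplemented if and only if every direct summand of M^n is H-supplemented. -/
/-!
H-supplementedness is a property of the submodule lattice: every `x` has a complemented partner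
`d` such that `x ⊔ d` is small above `x` and above `d`. Since `Mⁿ` is again quasi-injective and
polyform, every endomorphism `f` of it has a direct summand as image: the inverse of `f` on a
complement `K` of `ker f` extends to some `g`, and `f g f - f` vanishes on the essential submodule
`ker f ⊕ K`, so `f g` is an idempotent with the image of `f`. Consequently the sum of two direct
summands is a direct summand. In a modular lattice with this property, H-supplementedness passes
to the interval below a complemented element `d`: if `e` is the partner of `x ≤ d`, then
`(e ⊔ d') ⊓ d` is a partner of `x` in `[⊥, d]`, where `d'` is a complement of `d`.
-/

universe u v

/-- `N` is an essential submodule of `M`. -/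
def EssentialSub (R : Type v) [Ring R] {M : Type u} [AddCommGroup M] [Module R M]
    (N : Submodule R M) : Prop :=
  ∀ X : Submodule R M, N ⊓ X = ⊥ → X = ⊥

/-- `N` is a rational (dense) submodule of `M`. -/
def RationalSub (R : Type v) [Ring R] {M : Type u} [AddCommGroup M] [Module R M]
    (N : Submodule R M) : Prop :=
  ∀ X : Submodule R M, N ≤ X → ∀ f : ↥X →ₗ[R] M, (∀ x : ↥X, (x : M) ∈ N → f x = 0) → f = 0

/-- `M` is polyform: every essential submodule is rational. -/
def Polyform (R : Type v) [Ring R] (M : Type u) [AddCommGroup M] [Module R M] : Prop :=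
  ∀ N : Submodule R M, EssentialSub R N → RationalSub R N

/-- `M` is quasi-injective. -/
def QuasiInjective (R : Type v) [Ring R] (M : Type u) [AddCommGroup M] [Module R M] : Prop :=
  ∀ (N : Submodule R M) (f : ↥N →ₗ[R] M), ∃ g : M →ₗ[R] M, ∀ x : ↥N, g x = f x

section Lattice

variable {α β : Type*}

/-- For submodules, `IsSmallAbove b x` says `(x + b)/b ≪ M/b`. -/
def IsSmallAbove [Lattice α] [OrderTop α] (b x : α) : Prop :=
  ∀ y, b ≤ y → x ⊔ y = ⊤ → y = ⊤

def IsHSupplementedLattice (α : Type*) [Lattice α] [BoundedOrder α] : Prop :=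
  ∀ x : α, ∃ d, IsComplemented d ∧ IsSmallAbove d x ∧ IsSmallAbove x d

lemma isSmallAbove_sup_of_le [Lattice α] [OrderTop α] {b c x : α} (hc : c ≤ b) :
    IsSmallAbove b (x ⊔ c) ↔ IsSmallAbove b x :=
  forall₂_congr fun y hy => by rw [sup_assoc, sup_eq_right.mpr (hc.trans hy)]

lemma OrderIso.isSmallAbove_apply_iff [Lattice α] [OrderTop α] [Lattice β] [OrderTop β]
    (e : α ≃o β) {b x : α} : IsSmallAbove (e b) (e x) ↔ IsSmallAbove b x := by
  rw [IsSmallAbove, ← e.toEquiv.forall_congr_right]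
  simp only [IsSmallAbove, OrderIso.coe_toEquiv, e.le_iff_le, ← e.map_sup, ← e.map_top,
    e.apply_eq_iff_eq]

lemma IsHSupplementedLattice.of_orderIso [Lattice α] [BoundedOrder α] [Lattice β]
    [BoundedOrder β] (h : IsHSupplementedLattice α) (e : α ≃o β) : IsHSupplementedLattice β := by
  intro x
  obtain ⟨d, ⟨d', hdd'⟩, hxd, hdx⟩ := h (e.symm x)
  refine ⟨e d, ⟨e d', e.isCompl_iff.mp hdd'⟩, ?_, ?_⟩
  · simpa using e.isSmallAbove_apply_iff.mpr hxd
  · simpa using e.isSmallAbove_apply_iff.mpr hdx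

variable [Lattice α] [BoundedOrder α] [IsModularLattice α]

lemma IsCompl.eq_of_le_of_sup_eq_top {d d' y : α} (h : IsCompl d d') (hy : y ≤ d)
    (hyd' : y ⊔ d' = ⊤) : y = d :=
  calc y = y ⊔ d' ⊓ d := by rw [h.symm.inf_eq_bot, sup_bot_eq]
    _ = d := by rw [← sup_inf_assoc_of_le d' hy, hyd', top_inf_eq]

lemma IsCompl.isComplemented_sup_of_le {k k' p : α} (hk : IsCompl k k') (hp : IsComplemented p)
    (hpk' : p ≤ k') : IsComplemented (k ⊔ p) := by
  obtain ⟨q, hpq⟩ := hp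
  refine ⟨q ⊓ k', (hpq.disjoint.mono_right inf_le_left).isCompl_sup_left_of_isCompl_sup_right ?_⟩
  rwa [← sup_inf_assoc_of_le q hpk', hpq.sup_eq_top, top_inf_eq]

theorem IsHSupplementedLattice.Iic (h : IsHSupplementedLattice α)
    (hsup : ∀ a b : α, IsComplemented a → IsComplemented b → IsComplemented (a ⊔ b))
    {d : α} (hd : IsComplemented d) : IsHSupplementedLattice (Set.Iic d) := by
  rintro ⟨x, hxd⟩
  obtain ⟨d', hdd'⟩ := hd
  obtain ⟨e, he, hxe, hex⟩ := h x
  obtain ⟨g', hg⟩ := hsup e d' he ⟨d, hdd'.symm⟩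
  set f := (e ⊔ d') ⊓ d
  have hfd' : f ⊔ d' = e ⊔ d' := by
    rw [inf_sup_assoc_of_le _ le_sup_right, hdd'.sup_eq_top, inf_top_eq]
  have hf : IsCompl f (d' ⊔ g') :=
    (hdd'.disjoint.mono_left inf_le_right).isCompl_sup_right_of_isCompl_sup_left (by rwa [hfd'])
  refine ⟨⟨f, inf_le_right⟩, ⟨⟨(d' ⊔ g') ⊓ d, inf_le_right⟩, Set.Iic.isCompl_iff.mpr
    ⟨hf.disjoint.mono_right inf_le_left, ?_⟩⟩, ?_, ?_⟩
  · rw [← sup_inf_assoc_of_le _ inf_le_right, hf.sup_eq_top, top_inf_eq]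
  · intro y (hfy : f ≤ y) hxy
    have hxy : x ⊔ (y : α) = d := Set.Iic.eq_top_iff.mp hxy
    refine Set.Iic.eq_top_iff.mpr (hdd'.eq_of_le_of_sup_eq_top y.2 (hxe _ ?_ ?_))
    · exact le_sup_left.trans (hfd' ▸ sup_le_sup_right hfy d')
    · rw [← sup_assoc, hxy, hdd'.sup_eq_top]
  · intro y (hxy : x ≤ y) hfy
    have hfy : f ⊔ (y : α) = d := Set.Iic.eq_top_iff.mp hfy
    refine Set.Iic.eq_top_iff.mpr (hdd'.eq_of_le_of_sup_eq_top y.2 (hex _ ?_ ?_))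
    · exact le_sup_of_le_left hxy
    · calc e ⊔ (y ⊔ d') = (e ⊔ d') ⊔ y := by ac_rfl
        _ = (f ⊔ y) ⊔ d' := by rw [← hfd']; ac_rfl
        _ = ⊤ := by rw [hfy, hdd'.sup_eq_top]

end Lattice

theorem exists_disjoint_sup_essential {α : Type*} [CompleteLattice α] [IsModularLattice α]
    [IsCompactlyGenerated α] (a : α) : ∃ b, Disjoint a b ∧ ∀ x, (a ⊔ b) ⊓ x = ⊥ → x = ⊥ := by
  obtain ⟨b, -, hb⟩ := zorn_le_nonempty₀ {b | Disjoint a b}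
    (fun c hc hchain y hy => ⟨sSup c, (hchain.directedOn.disjoint_sSup_right).mpr hc,
      fun _ => le_sSup⟩) ⊥ disjoint_bot_right
  refine ⟨b, hb.prop, fun x hx => ?_⟩
  have hxb : x ≤ b := le_sup_right.trans
    (hb.eq_of_le (hb.prop.disjoint_sup_right_of_disjoint_sup_left (disjoint_iff.mpr hx))
      le_sup_left).ge
  rw [← hx, inf_eq_right.mpr (hxb.trans le_sup_right)]

section HSupplemented

variable {R : Type*} [Ring R] {A : Type*} [AddCommGroup A] [Module R A]

open Submodule

lemma smallSub_map_mkQ_iff_s6 (W P : Submodule R A) :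
    SmallSub R (W.map P.mkQ) ↔ IsSmallAbove P W := by
  have hcomap : ∀ Y, P ≤ Y → (Y.map P.mkQ).comap P.mkQ = Y := fun Y hY => by
    rw [comap_map_mkQ, sup_eq_right.mpr hY]
  have hmap : ∀ T : Submodule R (A ⧸ P), (T.comap P.mkQ).map P.mkQ = T :=
    map_comap_eq_of_surjective (mkQ_surjective P)
  constructor
  · intro hs Y hPY hWY
    have hYtop : Y.map P.mkQ = ⊤ := hs _ <| by
      rw [← Submodule.map_sup, hWY, Submodule.map_top, range_mkQ]
    rw [← hcomap Y hPY, hYtop, comap_top]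
  · intro h T hT
    have hle : P ≤ W ⊔ T.comap P.mkQ := (le_comap_mkQ P T).trans le_sup_right
    have htop : W ⊔ T.comap P.mkQ = ⊤ := by
      rw [← hcomap _ hle, Submodule.map_sup, hmap, hT, comap_top]
    rw [← hmap T, h _ (le_comap_mkQ P T) htop, Submodule.map_top, range_mkQ]

lemma hSupplemented_iff_isHSupplementedLattice :
    HSupplemented R A ↔ IsHSupplementedLattice (Submodule R A) := by
  refine forall_congr' fun X => exists_congr fun D => and_congr Iff.rfl (and_congr ?_ ?_)
  · rw [smallSub_map_mkQ_iff_s6, isSmallAbove_sup_of_le le_rfl]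
  · rw [smallSub_map_mkQ_iff_s6, sup_comm, isSmallAbove_sup_of_le le_rfl]

lemma hSupplemented_submodule_iff (D : Submodule R A) :
    HSupplemented R D ↔ IsHSupplementedLattice (Set.Iic D) := by
  rw [hSupplemented_iff_isHSupplementedLattice]
  exact ⟨fun h => h.of_orderIso D.mapIic, fun h => h.of_orderIso D.mapIic.symm⟩

end HSupplemented

section RelInjective

variable {R : Type*} [Ring R] {A B C : Type*} [AddCommGroup A] [Module R A] [AddCommGroup B]
  [Module R B] [AddCommGroup C] [Module R C]

open LinearMap

lemma LinearMap.exists_comp_rangeRestrict_eq_of_ker_le (φ : A →ₗ[R] B) (h : A →ₗ[R] C)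
    (hker : ker φ ≤ ker h) : ∃ h' : range φ →ₗ[R] C, h' ∘ₗ φ.rangeRestrict = h :=
  ⟨(ker φ).liftQ h hker ∘ₗ φ.quotKerEquivRange.symm.toLinearMap, by
    ext x; exact congrArg ((ker φ).liftQ h hker) (φ.quotKerEquivRange_symm_apply_image x _)⟩

variable (R) in
def RelInjective (A M : Type*) [AddCommGroup A] [Module R A] [AddCommGroup M] [Module R M] :
    Prop :=
  ∀ (S : Submodule R A) (f : S →ₗ[R] M), ∃ g : A →ₗ[R] M, ∀ x : S, g x = f x

namespace RelInjective

variable {M : Type*} [AddCommGroup M] [Module R M]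

lemma of_subsingleton [Subsingleton A] : RelInjective R A M :=
  fun _ f => ⟨0, fun x => by simp [Subsingleton.elim x 0]⟩

lemma of_linearEquiv (h : RelInjective R A M) (e : A ≃ₗ[R] B) : RelInjective R B M := by
  intro S f
  obtain ⟨g, hg⟩ :=
    h (S.map (e.symm : B →ₗ[R] A)) (f ∘ₗ (e.symm.submoduleMap S).symm.toLinearMap)
  refine ⟨g ∘ₗ e.symm.toLinearMap, fun x => ?_⟩
  exact (hg ⟨e.symm x, Submodule.mem_map_of_mem x.2⟩).trans
    (congrArg f ((LinearEquiv.symm_apply_eq _).mpr (Subtype.ext rfl)))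

lemma prod (hA : RelInjective R A M) (hB : RelInjective R B M) : RelInjective R (A × B) M := by
  intro S f
  obtain ⟨gB, hgB⟩ := hB (S.comap (inr R A B)) (f ∘ₗ (inr R A B).restrict fun _ hb => hb)
  set h := f - gB ∘ₗ snd R A B ∘ₗ S.subtype
  obtain ⟨h', hh'⟩ := (fst R A B ∘ₗ S.subtype).exists_comp_rangeRestrict_eq_of_ker_le h <| by
    intro s (hs : (s : A × B).1 = 0)
    have hs' : inr R A B (s : A × B).2 = s := Prod.ext hs.symm rfl
    have hmem : (s : A × B).2 ∈ S.comap (inr R A B) := by simp [hs']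
    have hrestrict : (inr R A B).restrict (fun _ hb => hb) ⟨_, hmem⟩ = s := Subtype.ext hs'
    show f s - gB (s : A × B).2 = 0
    rw [hgB ⟨_, hmem⟩, LinearMap.comp_apply, hrestrict, sub_self]
  obtain ⟨gA, hgA⟩ := hA _ h'
  refine ⟨gA ∘ₗ fst R A B + gB ∘ₗ snd R A B, fun s => ?_⟩
  have hgA' : gA (s : A × B).1 = f s - gB (s : A × B).2 :=
    (hgA ((fst R A B ∘ₗ S.subtype).rangeRestrict s)).trans (LinearMap.congr_fun hh' s)
  show gA (s : A × B).1 + gB (s : A × B).2 = f s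
  rw [hgA', sub_add_cancel]

theorem pi_fin : ∀ {n : ℕ} {A : Fin n → Type*} [∀ i, AddCommGroup (A i)] [∀ i, Module R (A i)],
    (∀ i, RelInjective R (A i) M) → RelInjective R (Π i, A i) M
  | 0, _, _, _, _ => of_subsingleton
  | _ + 1, A, _, _, h => ((h 0).prod (pi_fin fun i => h i.succ)).of_linearEquiv
      (Fin.consLinearEquiv R A)

lemma pi_right {ι : Type*} {M : ι → Type*} [∀ i, AddCommGroup (M i)] [∀ i, Module R (M i)]
    (h : ∀ i, RelInjective R A (M i)) : RelInjective R A (Π i, M i) := by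
  intro S f
  choose g hg using fun i => h i S (proj i ∘ₗ f)
  exact ⟨LinearMap.pi g, fun x => funext fun i => hg i x⟩

end RelInjective

lemma QuasiInjective.pi_fin {M : Type*} [AddCommGroup M] [Module R M] (h : QuasiInjective R M)
    (n : ℕ) : QuasiInjective R (Fin n → M) :=
  RelInjective.pi_right fun _ => RelInjective.pi_fin fun _ => h

end RelInjective

section Polyform

variable {R : Type*} [Ring R] {A B N : Type*} [AddCommGroup A] [Module R A] [AddCommGroup B]
  [Module R B] [AddCommGroup N] [Module R N]

open LinearMap

lemma EssentialSub.comap_of_injective {E : Submodule R B} (hE : EssentialSub R E)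
    {φ : A →ₗ[R] B} (hφ : Function.Injective φ) : EssentialSub R (E.comap φ) := by
  intro X hX
  refine Submodule.map_injective_of_injective hφ ((hE _ ?_).trans (Submodule.map_bot φ).symm)
  rw [eq_bot_iff]
  rintro _ ⟨hxE, x, hx, rfl⟩
  have hx0 : x ∈ E.comap φ ⊓ X := ⟨hxE, hx⟩
  rw [hX, Submodule.mem_bot] at hx0
  simp [hx0]

lemma Polyform.eq_zero_of_essentialSub (hpoly : Polyform R N) {E : Submodule R N}
    (hE : EssentialSub R E) {f : N →ₗ[R] N} (hf : ∀ x ∈ E, f x = 0) : f = 0 := by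
  have := hpoly E hE ⊤ le_top (f ∘ₗ (⊤ : Submodule R N).subtype) fun x hx => hf x hx
  exact LinearMap.ext fun x => LinearMap.congr_fun this ⟨x, trivial⟩

lemma Polyform.pi {ι M : Type*} [Finite ι] [AddCommGroup M] [Module R M] (hpoly : Polyform R M)
    (hqi : QuasiInjective R (ι → M)) : Polyform R (ι → M) := by
  classical
  intro E hE X hEX f hf
  obtain ⟨g, hg⟩ := hqi X f
  suffices hg0 : g = 0 from LinearMap.ext fun x => by rw [← hg x, hg0]; rfl
  refine pi_ext fun j m => funext fun i => ?_
  have hcoord := hpoly.eq_zero_of_essentialSub (f := proj i ∘ₗ g ∘ₗ single R (fun _ : ι => M) j)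
    (hE.comap_of_injective (ker_eq_bot.mp (ker_single R (fun _ : ι => M) j))) fun x hx =>
      congrFun ((hg ⟨_, hEX hx⟩).trans (hf ⟨_, hEX hx⟩ hx)) i
  exact LinearMap.congr_fun hcoord m

end Polyform

section DirectSummands

variable {R : Type*} [Ring R] {N : Type*} [AddCommGroup N] [Module R N]

open LinearMap

theorem QuasiInjective.isComplemented_range (hqi : QuasiInjective R N) (hpoly : Polyform R N)
    (f : N →ₗ[R] N) : IsComplemented (range f) := by
  obtain ⟨K, hK, hess⟩ := exists_disjoint_sup_essential (ker f)
  obtain ⟨h, hh⟩ := (f ∘ₗ K.subtype).exists_comp_rangeRestrict_eq_of_ker_le K.subtype <| by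
    rw [ker_comp, Submodule.disjoint_iff_comap_eq_bot.mp hK.symm]
    exact bot_le
  obtain ⟨g, hg⟩ := hqi _ h
  have hgf : ∀ k ∈ K, g (f k) = k := fun k hk =>
    (hg ((f ∘ₗ K.subtype).rangeRestrict ⟨k, hk⟩)).trans (LinearMap.congr_fun hh ⟨k, hk⟩)
  have hfgf : f ∘ₗ g ∘ₗ f = f := by
    rw [← sub_eq_zero]
    refine hpoly.eq_zero_of_essentialSub hess fun x hx => ?_
    obtain ⟨a, ha, k, hk, rfl⟩ := Submodule.mem_sup.mp hx
    simp [mem_ker.mp ha, hgf k hk]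
  have hidem : IsIdempotentElem (f ∘ₗ g) := LinearMap.ext fun x => LinearMap.congr_fun hfgf (g x)
  have hrange : range (f ∘ₗ g) = range f :=
    le_antisymm (range_comp_le_range g f) fun _ ⟨x, hx⟩ => ⟨f x, hx ▸ LinearMap.congr_fun hfgf x⟩
  exact ⟨_, hrange ▸ hidem.isCompl⟩

lemma Submodule.sup_map_eq_of_forall_sub_mem (K L : Submodule R N) {p : N →ₗ[R] N}
    (hp : ∀ x, x - p x ∈ K) : K ⊔ L.map p = K ⊔ L := by
  refine le_antisymm (sup_le le_sup_left ?_) (sup_le le_sup_left ?_)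
  · rintro _ ⟨l, hl, rfl⟩
    rw [← sub_sub_cancel l (p l)]
    exact sub_mem (Submodule.mem_sup_right hl) (Submodule.mem_sup_left (hp l))
  · intro l hl
    rw [← sub_add_cancel l (p l)]
    exact Submodule.add_mem_sup (hp l) (Submodule.mem_map_of_mem hl)

theorem isComplemented_sup_of_forall_isComplemented_range
    (hrange : ∀ f : N →ₗ[R] N, IsComplemented (range f)) {K L : Submodule R N}
    (hK : IsComplemented K) (hL : IsComplemented L) : IsComplemented (K ⊔ L) := by
  obtain ⟨K', hKK'⟩ := hK
  obtain ⟨L', hLL'⟩ := hL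
  set p := K'.projection K hKK'.symm
  have hmap : L.map p = range (p ∘ₗ L.projection L' hLL') := by
    rw [range_comp, Submodule.range_projection]
  rw [← K.sup_map_eq_of_forall_sub_mem L (Submodule.sub_projection_mem hKK'.symm)]
  exact hKK'.isComplemented_sup_of_le (hmap ▸ hrange _)
    (map_le_range.trans (Submodule.range_projection _).le)

end DirectSummands

theorem stmt6 {R : Type v} [Ring R] {M : Type u} [AddCommGroup M] [Module R M]
    (hqi : QuasiInjective R M) (hpoly : Polyform R M) (n : ℕ) :
    HSupplemented R (Fin n → M) ↔
      ∀ D : Submodule R (Fin n → M), IsDirectSummand R D → HSupplemented R ↥D := by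
  have hqin := hqi.pi_fin n
  have hsup : ∀ K L : Submodule R (Fin n → M), IsComplemented K → IsComplemented L →
      IsComplemented (K ⊔ L) := fun _ _ =>
    isComplemented_sup_of_forall_isComplemented_range
      (hqin.isComplemented_range (hpoly.pi hqin))
  constructor
  · intro h D hD
    rw [hSupplemented_submodule_iff]
    exact (hSupplemented_iff_isHSupplementedLattice.mp h).Iic hsup hD
  · intro h
    have hTop := (hSupplemented_submodule_iff ⊤).mp (h ⊤ isComplemented_top)
    exact hSupplemented_iff_isHSupplementedLattice.mpr (hTop.of_orderIso OrderIso.IicTop)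
end

section
/- If M1 is M2-projective, then M1 is M2-sjective in M = M1 ⊕ M2. -/
universe u v

/-- Given `M = M1 ⊕ M2`, `M1` is `M2`-sjective: for every submodule `A` with
`M = A + M2` there is `K` with `M = K ⊕ M2` and `(A+K)/A ≪ M/A`. -/
def Sjective (R : Type v) [Ring R] {M : Type u} [AddCommGroup M] [Module R M]
    (M1 M2 : Submodule R M) : Prop :=
  ∀ A : Submodule R M, A ⊔ M2 = ⊤ →
    ∃ K : Submodule R M, IsCompl K M2 ∧ SmallSub R ((A ⊔ K).map A.mkQ)

theorem stmt7 {R : Type v} [Ring R] {M : Type u} [AddCommGroup M] [Module R M]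
    (M1 M2 : Submodule R M) (hcompl : IsCompl M1 M2)
    (hproj : ∀ (N : Type u) [AddCommGroup N] [Module R N] (g : ↥M2 →ₗ[R] N),
      Function.Surjective g → ∀ f : ↥M1 →ₗ[R] N, ∃ h : ↥M1 →ₗ[R] ↥M2, g.comp h = f) :
    Sjective R M1 M2 := by
  intro A hA
  -- g : M2 → M/A is surjective
  have hgsurj : Function.Surjective (A.mkQ.comp M2.subtype) := by
    intro x
    obtain ⟨m, rfl⟩ := A.mkQ_surjective x
    have hm : m ∈ A ⊔ M2 := hA ▸ Submodule.mem_top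
    obtain ⟨a, ha, b, hb, rfl⟩ := Submodule.mem_sup.mp hm
    refine ⟨⟨b, hb⟩, ?_⟩
    simp [Submodule.Quotient.mk_add, (Submodule.Quotient.mk_eq_zero A).mpr ha]
  obtain ⟨h, hh⟩ := hproj (M ⧸ A) (A.mkQ.comp M2.subtype) hgsurj (A.mkQ.comp M1.subtype)
  have hh' : ∀ m1 : M1, A.mkQ (h m1 : M) = A.mkQ (m1 : M) := fun m1 =>
    congrArg (fun f : ↥M1 →ₗ[R] M ⧸ A => f m1) hh
  set φ : ↥M1 →ₗ[R] M := M1.subtype - M2.subtype.comp h with hφ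
  refine ⟨LinearMap.range φ, ?_, ?_⟩
  · constructor
    · -- disjoint
      rw [disjoint_iff]
      rw [Submodule.eq_bot_iff]
      rintro x ⟨⟨m1, rfl⟩, hx2⟩
      have hmem : (m1 : M) ∈ M2 := by
        have : (m1 : M) = φ m1 + (h m1 : M) := by simp [hφ]
        rw [this]
        exact M2.add_mem hx2 (h m1).2
      have : (m1 : M) ∈ M1 ⊓ M2 := ⟨m1.2, hmem⟩
      rw [hcompl.inf_eq_bot] at this
      simp [hφ, Submodule.coe_eq_zero.mp this]
    · -- codisjoint
      rw [codisjoint_iff]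
      rw [eq_top_iff]
      intro m _
      have hm : m ∈ M1 ⊔ M2 := hcompl.sup_eq_top ▸ Submodule.mem_top
      obtain ⟨a, ha, b, hb, rfl⟩ := Submodule.mem_sup.mp hm
      have : a + b = φ ⟨a, ha⟩ + ((h ⟨a, ha⟩ : M) + b) := by simp [hφ]; abel
      rw [this]
      exact Submodule.add_mem_sup (LinearMap.mem_range_self φ _)
        (M2.add_mem (h ⟨a, ha⟩).2 hb)
  · -- smallness : A ⊔ K = A, image is ⊥
    have hKA : LinearMap.range φ ≤ A := by
      rintro x ⟨m1, rfl⟩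
      have : A.mkQ (φ m1) = 0 := by
        simp only [hφ, LinearMap.sub_apply, LinearMap.coe_comp, Function.comp_apply,
          Submodule.coe_subtype, map_sub]
        rw [hh' m1, sub_self]
      rwa [← Submodule.Quotient.mk_eq_zero A]
    have : (A ⊔ LinearMap.range φ).map A.mkQ = ⊥ := by
      rw [sup_eq_left.mpr hKA]
      exact Submodule.mkQ_map_self A
    rw [this]
    intro X hX
    simpa using hX
end

section
/- If M = M1 ⊕ M2 is an H-supplemented module satisfying (D3), then M1 is M2-sjective and M2 is M1-sjective. -/
universe u v

lemma sjective_aux {R : Type v} [Ring R] {M : Type u} [AddCommGroup M] [Module R M]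
    (M1 M2 : Submodule R M) (hM2 : IsDirectSummand R M2)
    (hH : HSupplemented R M) (hD3 : CondD3 R M) :
    Sjective R M1 M2 := by
  intro A hA
  obtain ⟨D, hDsum, hs1, hs2⟩ := hH A
  -- Step 1 : D ⊔ M2 = ⊤
  have hDM2 : D ⊔ M2 = ⊤ := by
    have h1 : ((A ⊔ D).map D.mkQ) ⊔ (M2.map D.mkQ) = ⊤ := by
      rw [← Submodule.map_sup]
      have : A ⊔ D ⊔ M2 = ⊤ := by
        rw [show A ⊔ D ⊔ M2 = (A ⊔ M2) ⊔ D by rw [sup_right_comm], hA, top_sup_eq]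
      rw [this, Submodule.map_top, Submodule.range_mkQ]
    have h2 : M2.map D.mkQ = ⊤ := hs1 _ h1
    have h3 := Submodule.comap_map_mkQ D M2
    rw [h2] at h3
    have : Submodule.comap D.mkQ ⊤ = ⊤ := Submodule.comap_top _
    rw [this] at h3
    exact h3.symm
  -- Step 2 : D ⊓ M2 is a direct summand
  obtain ⟨K', hK'⟩ := hD3 D M2 hDsum hM2 hDM2
  -- Step 3 : K = D ⊓ K' is a complement of M2
  refine ⟨D ⊓ K', ⟨?_, ?_⟩, ?_⟩
  · -- disjoint
    rw [disjoint_iff]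
    have : D ⊓ K' ⊓ M2 = (D ⊓ M2) ⊓ K' := by
      rw [inf_right_comm]
    rw [this, disjoint_iff.mp hK'.disjoint]
  · -- codisjoint
    rw [codisjoint_iff]
    have hmod : ((D ⊓ M2) ⊔ K') ⊓ D = (D ⊓ M2) ⊔ (K' ⊓ D) :=
      sup_inf_assoc_of_le _ inf_le_left
    rw [codisjoint_iff.mp hK'.codisjoint, top_inf_eq] at hmod
    rw [eq_top_iff, ← hDM2]
    refine sup_le ?_ le_sup_right
    calc D = D ⊓ M2 ⊔ K' ⊓ D := hmod
      _ ≤ D ⊓ K' ⊔ M2 :=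
        sup_le (inf_le_right.trans le_sup_right)
          ((inf_comm K' D).le.trans le_sup_left)
  · -- smallness
    intro X hX
    apply hs2
    rw [eq_top_iff, ← hX]
    exact sup_le_sup_right
      (Submodule.map_mono (sup_le_sup_left inf_le_left A)) X

theorem stmt8 {R : Type v} [Ring R] {M : Type u} [AddCommGroup M] [Module R M]
    (M1 M2 : Submodule R M) (hcompl : IsCompl M1 M2)
    (hH : HSupplemented R M) (hD3 : CondD3 R M) :
    Sjective R M1 M2 ∧ Sjective R M2 M1 := by
  exact ⟨sjective_aux M1 M2 ⟨M1, hcompl.symm⟩ hH hD3,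
    sjective_aux M2 M1 ⟨M2, hcompl⟩ hH hD3⟩
end

section
/- Let M = M1 ⊕ M2 be weakly supplemented. If M1 is M2-sjective and both M1 and M2 are H-supplemented, then M is H-supplemented. -/
universe u v

/-- `M` is weakly supplemented. -/
def WeaklySupplemented (R : Type v) [Ring R] (M : Type u) [AddCommGroup M] [Module R M] :
    Prop :=
  ∀ N : Submodule R M, ∃ K : Submodule R M, N ⊔ K = ⊤ ∧ SmallSub R (N ⊓ K)

section Aux
variable {R : Type v} [Ring R] {M : Type u} [AddCommGroup M] [Module R M]

/-- The smallness of the image of `N` in `M/C` rephrased as a covering criterion in the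
lattice of submodules of `M`. -/
theorem smallSub_iff_crit (C N : Submodule R M) :
    SmallSub R (N.map C.mkQ) ↔ ∀ Y : Submodule R M, C ≤ Y → N ⊔ Y = ⊤ → Y = ⊤ := by
  constructor
  · intro h Y hCY hNY
    have h1 : N.map C.mkQ ⊔ Y.map C.mkQ = ⊤ := by
      rw [← Submodule.map_sup, hNY, Submodule.map_top, Submodule.range_mkQ]
    have h2 := h _ h1
    have h3 := congrArg (Submodule.comap C.mkQ) h2
    rwa [Submodule.comap_map_mkQ, Submodule.comap_top, sup_comm,
      sup_of_le_left hCY] at h3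
  · intro h Ybar hsup
    have hCY : C ≤ Submodule.comap C.mkQ Ybar := by
      intro x hx
      have hx0 : C.mkQ x = 0 := by
        rw [← LinearMap.mem_ker, Submodule.ker_mkQ]; exact hx
      simp only [Submodule.mem_comap, hx0]
      exact Ybar.zero_mem
    have hmap : Submodule.map C.mkQ (Submodule.comap C.mkQ Ybar) = Ybar :=
      Submodule.map_comap_eq_self (by rw [Submodule.range_mkQ]; exact le_top)
    have hNY : N ⊔ Submodule.comap C.mkQ Ybar = ⊤ := by
      have hm : Submodule.map C.mkQ (N ⊔ Submodule.comap C.mkQ Ybar) = ⊤ := by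
        rw [Submodule.map_sup, hmap, hsup]
      have h2 := congrArg (Submodule.comap C.mkQ) hm
      rw [Submodule.comap_map_mkQ, Submodule.comap_top] at h2
      rw [← h2]
      exact (sup_of_le_right (hCY.trans le_sup_right)).symm
    have hY := h _ hCY hNY
    rw [← hmap, hY, Submodule.map_top, Submodule.range_mkQ]

/-- If `P` is small inside a submodule `B` (in the criterion sense), it is small in `M`. -/
theorem small_chain {P B : Submodule R M} (hPB : P ≤ B)
    (h : ∀ Z : Submodule R M, Z ≤ B → P ⊔ Z = B → Z = B) :
    ∀ Y : Submodule R M, P ⊔ Y = ⊤ → Y = ⊤ := by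
  intro Y hPY
  have h1 : (P ⊔ Y) ⊓ B = B := by rw [hPY, top_inf_eq]
  have h2 : P ⊔ (Y ⊓ B) = B := by rw [← sup_inf_assoc_of_le _ hPB]; exact h1
  have h3 := h (Y ⊓ B) inf_le_right h2
  have hBY : B ≤ Y := by rw [← h3]; exact inf_le_left
  rw [← hPY, sup_eq_right.mpr (hPB.trans hBY)]

/-- Transfer of an internal smallness criterion from a submodule `M1` to `M`. -/
theorem internal_crit {M1 : Submodule R M} {x1 d1 : Submodule R ↥M1}
    (h : SmallSub R ((x1 ⊔ d1).map d1.mkQ)) :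
    ∀ Z : Submodule R M, Z ≤ M1 → d1.map M1.subtype ≤ Z →
      x1.map M1.subtype ⊔ Z = M1 → Z = M1 := by
  intro Z hZM hdZ hxZ
  have hcrit := (smallSub_iff_crit (M := ↥M1) d1 (x1 ⊔ d1)).mp h
  have hd1z : d1 ≤ Z.comap M1.subtype := Submodule.map_le_iff_le_comap.mp hdZ
  have hmapz : (Z.comap M1.subtype).map M1.subtype = Z := by
    rw [Submodule.map_comap_subtype]
    exact inf_eq_right.mpr hZM
  have hxz : x1 ⊔ Z.comap M1.subtype = ⊤ := by
    apply Submodule.map_injective_of_injective M1.injective_subtype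
    rw [Submodule.map_sup, hmapz, Submodule.map_top, Submodule.range_subtype]
    exact hxZ
  have hsup : (x1 ⊔ d1) ⊔ Z.comap M1.subtype = ⊤ := by
    rw [sup_assoc, sup_eq_right.mpr hd1z, hxz]
  have hz := hcrit _ hd1z hsup
  rw [← hmapz, hz, Submodule.map_top, Submodule.range_subtype]

end Aux

theorem stmt9 {R : Type v} [Ring R] {M : Type u} [AddCommGroup M] [Module R M]
    (M1 M2 : Submodule R M) (hcompl : IsCompl M1 M2)
    (hws : WeaklySupplemented R M)
    (hsj : Sjective R M1 M2)
    (h1 : HSupplemented R ↥M1) (h2 : HSupplemented R ↥M2) :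
    HSupplemented R M := by
  intro X
  -- ### Apply h1 to the trace `X1` of `X` in `M1`
  set X1 : Submodule R M := M1 ⊓ (X ⊔ M2) with hX1def
  obtain ⟨d1, ⟨d1c, hd1compl⟩, hs1, hs2⟩ := h1 (X1.comap M1.subtype)
  set D1 : Submodule R M := d1.map M1.subtype with hD1def
  set D1' : Submodule R M := d1c.map M1.subtype with hD1'def
  have hD1M : D1 ≤ M1 := by rw [hD1def]; exact Submodule.map_subtype_le _ _
  have hD1'M : D1' ≤ M1 := by rw [hD1'def]; exact Submodule.map_subtype_le _ _
  have hX1M : X1 ≤ M1 := inf_le_left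
  have hx1map : (X1.comap M1.subtype).map M1.subtype = X1 := by
    rw [Submodule.map_comap_subtype]; exact inf_eq_right.mpr hX1M
  have hD1sup : D1 ⊔ D1' = M1 := by
    rw [hD1def, hD1'def, ← Submodule.map_sup, hd1compl.sup_eq_top, Submodule.map_top,
      Submodule.range_subtype]
  have hD1disj : D1 ⊓ D1' = ⊥ := by
    rw [hD1def, hD1'def, ← Submodule.map_inf _ M1.injective_subtype, hd1compl.inf_eq_bot,
      Submodule.map_bot]
  have h1b : ∀ Z : Submodule R M, Z ≤ M1 → D1 ≤ Z → X1 ⊔ Z = M1 → Z = M1 := by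
    intro Z hZ hdZ hxZ
    refine internal_crit hs1 Z hZ ?_ ?_
    · rw [← hD1def]; exact hdZ
    · rw [hx1map]; exact hxZ
  have h1c : ∀ Z : Submodule R M, Z ≤ M1 → X1 ≤ Z → D1 ⊔ Z = M1 → Z = M1 := by
    intro Z hZ hxZ hdZ
    rw [sup_comm] at hs2
    refine internal_crit hs2 Z hZ ?_ ?_
    · rw [hx1map]; exact hxZ
    · rw [← hD1def]; exact hdZ
  have hN1 : ∀ Z : Submodule R M, Z ≤ M1 → D1 ⊔ Z = M1 → X1 ⊔ Z = M1 := by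
    intro Z hZ hdZ
    refine h1c (X1 ⊔ Z) (sup_le hX1M hZ) le_sup_left ?_
    refine le_antisymm (sup_le hD1M (sup_le hX1M hZ)) ?_
    rw [← hdZ]
    exact sup_le_sup_left le_sup_right _
  have hX1D1' : X1 ⊔ D1' = M1 := hN1 D1' hD1'M hD1sup
  -- ### `A := X ⊔ D1'` satisfies `A ⊔ M2 = ⊤`; apply sjectivity
  set A : Submodule R M := X ⊔ D1' with hAdef
  have hAM2 : A ⊔ M2 = ⊤ := by
    refine le_antisymm le_top ?_
    rw [← hcompl.sup_eq_top]
    refine sup_le ?_ le_sup_right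
    rw [← hX1D1']
    refine sup_le ?_ ?_
    · exact inf_le_right.trans (sup_le (le_sup_left.trans le_sup_left) le_sup_right)
    · exact le_sup_right.trans le_sup_left
  obtain ⟨K, hKcompl, hKsmall⟩ := hsj A hAM2
  have h3 : ∀ Y : Submodule R M, A ≤ Y → K ⊔ Y = ⊤ → Y = ⊤ := by
    intro Y hAY hKY
    refine (smallSub_iff_crit A (A ⊔ K)).mp hKsmall Y hAY ?_
    refine le_antisymm le_top ?_
    rw [← hKY]
    exact sup_le_sup_right le_sup_right _
  set S0 : Submodule R M := A ⊓ M2 with hS0def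
  set S : Submodule R M := M2 ⊓ (A ⊔ K) with hSdef
  have hS0M2 : S0 ≤ M2 := inf_le_right
  have hSM2 : S ≤ M2 := inf_le_left
  have hKAS : K ≤ A ⊔ S := by
    intro k hk
    have hkT : k ∈ A ⊔ M2 := by rw [hAM2]; trivial
    obtain ⟨a, ha, m2, hm2, hsum⟩ := Submodule.mem_sup.mp hkT
    have hm2S : m2 ∈ S := by
      rw [hSdef]
      refine Submodule.mem_inf.mpr ⟨hm2, ?_⟩
      have he : m2 = k - a := by rw [← hsum]; abel
      rw [he]
      exact sub_mem (Submodule.mem_sup_right hk) (Submodule.mem_sup_left ha)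
    exact hsum ▸ add_mem (Submodule.mem_sup_left ha) (Submodule.mem_sup_right hm2S)
  have h4 : ∀ Z : Submodule R M, Z ≤ M2 → S0 ≤ Z → S ⊔ Z = M2 → Z = M2 := by
    intro Z hZ hS0Z hSZ
    have hKAZ : K ⊔ (A ⊔ Z) = ⊤ := by
      refine le_antisymm le_top ?_
      rw [← hAM2, ← hSZ]
      refine sup_le (le_sup_left.trans le_sup_right) (sup_le ?_ ?_)
      · refine (inf_le_right : S ≤ A ⊔ K).trans (sup_le ?_ le_sup_left)
        exact le_sup_left.trans le_sup_right
      · exact le_sup_right.trans le_sup_right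
    have hAZ : A ⊔ Z = ⊤ := h3 _ le_sup_left hKAZ
    have hmod : Z ⊔ (A ⊓ M2) = M2 := by
      have hm := sup_inf_assoc_of_le A hZ
      rw [← hm, sup_comm Z A, hAZ, top_inf_eq]
    rw [← hS0def] at hmod
    rw [← hmod, sup_eq_left.mpr hS0Z]
  -- ### Apply h2 to `S0`
  obtain ⟨d2, ⟨d2c, hd2compl⟩, hs4, hs5⟩ := h2 (S0.comap M2.subtype)
  set D2 : Submodule R M := d2.map M2.subtype with hD2def
  set D2' : Submodule R M := d2c.map M2.subtype with hD2'def
  have hD2M : D2 ≤ M2 := by rw [hD2def]; exact Submodule.map_subtype_le _ _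
  have hD2'M : D2' ≤ M2 := by rw [hD2'def]; exact Submodule.map_subtype_le _ _
  have hs0map : (S0.comap M2.subtype).map M2.subtype = S0 := by
    rw [Submodule.map_comap_subtype]; exact inf_eq_right.mpr hS0M2
  have hD2sup : D2 ⊔ D2' = M2 := by
    rw [hD2def, hD2'def, ← Submodule.map_sup, hd2compl.sup_eq_top, Submodule.map_top,
      Submodule.range_subtype]
  have hD2disj : D2 ⊓ D2' = ⊥ := by
    rw [hD2def, hD2'def, ← Submodule.map_inf _ M2.injective_subtype, hd2compl.inf_eq_bot,
      Submodule.map_bot]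
  have h2b : ∀ Z : Submodule R M, Z ≤ M2 → D2 ≤ Z → S0 ⊔ Z = M2 → Z = M2 := by
    intro Z hZ hdZ hxZ
    refine internal_crit hs4 Z hZ ?_ ?_
    · rw [← hD2def]; exact hdZ
    · rw [hs0map]; exact hxZ
  have h2c : ∀ Z : Submodule R M, Z ≤ M2 → S0 ≤ Z → D2 ⊔ Z = M2 → Z = M2 := by
    intro Z hZ hxZ hdZ
    rw [sup_comm] at hs5
    refine internal_crit hs5 Z hZ ?_ ?_
    · rw [hs0map]; exact hxZ
    · rw [← hD2def]; exact hdZ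
  have hN2 : S0 ⊔ D2' = M2 := by
    refine h2c (S0 ⊔ D2') (sup_le hS0M2 hD2'M) le_sup_left ?_
    refine le_antisymm (sup_le hD2M (sup_le hS0M2 hD2'M)) ?_
    rw [← hD2sup]
    exact sup_le_sup_left le_sup_right _
  -- ### `K1` and the candidate summand `DD := K1 ⊔ D2`
  set K1 : Submodule R M := K ⊓ (D1 ⊔ M2) with hK1def
  have hK1K : K1 ≤ K := inf_le_left
  have hK1DM : K1 ≤ D1 ⊔ M2 := inf_le_right
  have hD1K1M2 : D1 ≤ K1 ⊔ M2 := by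
    intro d hd
    have hdT : d ∈ K ⊔ M2 := by rw [hKcompl.sup_eq_top]; trivial
    obtain ⟨k, hk, m2, hm2, hsum⟩ := Submodule.mem_sup.mp hdT
    have hkK1 : k ∈ K1 := by
      rw [hK1def]
      refine Submodule.mem_inf.mpr ⟨hk, ?_⟩
      have he : k = d - m2 := by rw [← hsum]; abel
      rw [he]
      exact sub_mem (Submodule.mem_sup_left hd) (Submodule.mem_sup_right hm2)
    exact hsum ▸ add_mem (Submodule.mem_sup_left hkK1) (Submodule.mem_sup_right hm2)
  have hTop22 : K1 ⊔ (D1' ⊔ M2) = ⊤ := by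
    refine le_antisymm le_top ?_
    rw [← hcompl.sup_eq_top]
    refine sup_le ?_ (le_sup_right.trans le_sup_right)
    rw [← hD1sup]
    refine sup_le ?_ (le_sup_left.trans le_sup_right)
    exact hD1K1M2.trans (sup_le le_sup_left (le_sup_right.trans le_sup_right))
  have hK1disj : K1 ⊓ (D1' ⊔ M2) = ⊥ := by
    rw [eq_bot_iff]
    intro w hw
    obtain ⟨hwK1, hwr⟩ := Submodule.mem_inf.mp hw
    rw [hK1def] at hwK1
    obtain ⟨hwK, hwDM⟩ := Submodule.mem_inf.mp hwK1
    obtain ⟨e1, he1, m2, hm2, hA⟩ := Submodule.mem_sup.mp hwDM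
    obtain ⟨e1', he1', m2', hm2', hB⟩ := Submodule.mem_sup.mp hwr
    have hAB : e1 + m2 = e1' + m2' := hA.trans hB.symm
    have he : e1 - e1' = m2' - m2 := by
      have h5 : e1 = (e1' + m2') - m2 := eq_sub_of_add_eq hAB
      rw [h5]; abel
    have hmem : e1 - e1' ∈ M1 ⊓ M2 := by
      refine Submodule.mem_inf.mpr ⟨sub_mem (hD1M he1) (hD1'M he1'), ?_⟩
      rw [he]; exact sub_mem hm2' hm2
    rw [hcompl.inf_eq_bot, Submodule.mem_bot] at hmem
    have hee : e1 = e1' := sub_eq_zero.mp hmem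
    have he1b : e1 ∈ D1 ⊓ D1' := Submodule.mem_inf.mpr ⟨he1, hee ▸ he1'⟩
    rw [hD1disj, Submodule.mem_bot] at he1b
    have hwm2 : w = m2 := by rw [← hA, he1b, zero_add]
    have hwb : w ∈ K ⊓ M2 := Submodule.mem_inf.mpr ⟨hwK, hwm2 ▸ hm2⟩
    rw [hKcompl.inf_eq_bot, Submodule.mem_bot] at hwb
    simpa using hwb
  set DD : Submodule R M := K1 ⊔ D2 with hDDdef
  have hDDsum : DD ⊔ (D1' ⊔ D2') = ⊤ := by
    refine le_antisymm le_top ?_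
    rw [← hTop22]
    refine sup_le (le_sup_left.trans le_sup_left) (sup_le (le_sup_left.trans le_sup_right) ?_)
    rw [← hD2sup]
    exact sup_le (le_sup_right.trans le_sup_left) (le_sup_right.trans le_sup_right)
  have hDDdisj : DD ⊓ (D1' ⊔ D2') = ⊥ := by
    rw [eq_bot_iff]
    intro u hu
    obtain ⟨huD, hur⟩ := Submodule.mem_inf.mp hu
    obtain ⟨k1, hk1, e2, he2, hA⟩ := Submodule.mem_sup.mp huD
    obtain ⟨e1', he1', e2', he2', hB⟩ := Submodule.mem_sup.mp hur
    have hk1mem : k1 ∈ K1 ⊓ (D1' ⊔ M2) := by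
      refine Submodule.mem_inf.mpr ⟨hk1, ?_⟩
      have he : k1 = e1' + (e2' - e2) := by
        have h5 : k1 = (e1' + e2') - e2 := by rw [hB, ← hA]; abel
        rw [h5]; abel
      rw [he]
      exact add_mem (Submodule.mem_sup_left he1')
        (Submodule.mem_sup_right (sub_mem (hD2'M he2') (hD2M he2)))
    rw [hK1disj, Submodule.mem_bot] at hk1mem
    have hue2 : u = e2 := by rw [← hA, hk1mem, zero_add]
    have he12 : e2 - e2' = e1' := by
      have h5 : e2 = e1' + e2' := by rw [← hue2, ← hB]
      rw [h5]; abel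
    have hmm : e2 - e2' ∈ M1 ⊓ M2 := by
      refine Submodule.mem_inf.mpr ⟨?_, sub_mem (hD2M he2) (hD2'M he2')⟩
      rw [he12]; exact hD1'M he1'
    rw [hcompl.inf_eq_bot, Submodule.mem_bot] at hmm
    have he2e : e2 = e2' := sub_eq_zero.mp hmm
    have he2b : e2 ∈ D2 ⊓ D2' := Submodule.mem_inf.mpr ⟨he2, he2e ▸ he2'⟩
    rw [hD2disj, Submodule.mem_bot] at he2b
    rw [hue2, he2b]
    exact Submodule.zero_mem _
  -- ### The small pieces `P1` and `P2`
  set P1 : Submodule R M := D1' ⊓ (D1 ⊔ X1) with hP1def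
  set P2 : Submodule R M := D2' ⊓ (D2 ⊔ S0) with hP2def
  have hP1int : ∀ Z : Submodule R M, Z ≤ D1' → P1 ⊔ Z = D1' → Z = D1' := by
    intro Z hZ hPZ
    have hsup : X1 ⊔ (D1 ⊔ Z) = M1 := by
      refine le_antisymm (sup_le hX1M (sup_le hD1M (hZ.trans hD1'M))) ?_
      rw [← hD1sup, ← hPZ]
      refine sup_le (le_sup_left.trans le_sup_right) (sup_le ?_ (le_sup_right.trans le_sup_right))
      exact inf_le_right.trans (sup_le (le_sup_left.trans le_sup_right) le_sup_left)
    have hDZ : D1 ⊔ Z = M1 := h1b _ (sup_le hD1M (hZ.trans hD1'M)) le_sup_left hsup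
    have hmod : Z ⊔ (D1 ⊓ D1') = D1' := by
      have hm := sup_inf_assoc_of_le D1 hZ
      rw [← hm, sup_comm Z D1, hDZ]
      exact inf_eq_right.mpr hD1'M
    rw [← hmod, hD1disj, sup_bot_eq]
  have SmP1 : ∀ Y : Submodule R M, P1 ⊔ Y = ⊤ → Y = ⊤ := small_chain inf_le_left hP1int
  have hP2int : ∀ Z : Submodule R M, Z ≤ D2' → P2 ⊔ Z = D2' → Z = D2' := by
    intro Z hZ hPZ
    have hsup : S0 ⊔ (D2 ⊔ Z) = M2 := by
      refine le_antisymm (sup_le hS0M2 (sup_le hD2M (hZ.trans hD2'M))) ?_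
      rw [← hD2sup, ← hPZ]
      refine sup_le (le_sup_left.trans le_sup_right) (sup_le ?_ (le_sup_right.trans le_sup_right))
      exact inf_le_right.trans (sup_le (le_sup_left.trans le_sup_right) le_sup_left)
    have hDZ : D2 ⊔ Z = M2 := h2b _ (sup_le hD2M (hZ.trans hD2'M)) le_sup_left hsup
    have hmod : Z ⊔ (D2 ⊓ D2') = D2' := by
      have hm := sup_inf_assoc_of_le D2 hZ
      rw [← hm, sup_comm Z D2, hDZ]
      exact inf_eq_right.mpr hD2'M
    rw [← hmod, hD2disj, sup_bot_eq]
  have SmP2 : ∀ Y : Submodule R M, P2 ⊔ Y = ⊤ → Y = ⊤ := small_chain inf_le_left hP2int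
  -- ### Containments
  have hS0XP1 : S0 ≤ X ⊔ P1 := by
    intro s hs
    obtain ⟨hsA, hsM2⟩ := Submodule.mem_inf.mp hs
    obtain ⟨x, hx, w, hw, hsum⟩ := Submodule.mem_sup.mp hsA
    have hwX1 : w ∈ X1 := by
      rw [hX1def]
      refine Submodule.mem_inf.mpr ⟨hD1'M hw, ?_⟩
      have he : w = s - x := by rw [← hsum]; abel
      rw [he]
      exact sub_mem (Submodule.mem_sup_right hsM2) (Submodule.mem_sup_left hx)
    have hwP : w ∈ P1 := by
      rw [hP1def]
      exact Submodule.mem_inf.mpr ⟨hw, Submodule.mem_sup_right hwX1⟩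
    exact hsum ▸ add_mem (Submodule.mem_sup_left hx) (Submodule.mem_sup_right hwP)
  have hD2le : D2 ≤ S0 ⊔ P2 := by
    intro d hd
    have hdM : d ∈ S0 ⊔ D2' := by rw [hN2]; exact hD2M hd
    obtain ⟨s0, hs0, w, hw, hsum⟩ := Submodule.mem_sup.mp hdM
    have hwP : w ∈ P2 := by
      rw [hP2def]
      refine Submodule.mem_inf.mpr ⟨hw, ?_⟩
      have he : w = d - s0 := by rw [← hsum]; abel
      rw [he]
      exact sub_mem (Submodule.mem_sup_left hd) (Submodule.mem_sup_right hs0)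
    exact hsum ▸ add_mem (Submodule.mem_sup_left hs0) (Submodule.mem_sup_right hwP)
  have hK1le : K1 ≤ X ⊔ (P1 ⊔ S) := by
    intro k hk
    have hkDM : k ∈ D1 ⊔ M2 := hK1DM hk
    have hkAS : k ∈ A ⊔ S := hKAS (hK1K hk)
    obtain ⟨a, ha, s, hsS, hA1⟩ := Submodule.mem_sup.mp hkAS
    obtain ⟨x, hx, w, hw, hA2⟩ := Submodule.mem_sup.mp ha
    obtain ⟨e1, he1, m2, hm2, hA3⟩ := Submodule.mem_sup.mp hkDM
    have h4' : x + w + s = e1 + m2 := by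
      rw [hA2, hA1, hA3]
    have he : e1 - w = x + (s - m2) := by
      have h5 : e1 = (x + w + s) - m2 := eq_sub_of_add_eq h4'.symm
      rw [h5]; abel
    have htX1 : e1 - w ∈ X1 := by
      rw [hX1def]
      refine Submodule.mem_inf.mpr ⟨sub_mem (hD1M he1) (hD1'M hw), ?_⟩
      rw [he]
      exact add_mem (Submodule.mem_sup_left hx)
        (Submodule.mem_sup_right (sub_mem (hSM2 hsS) hm2))
    have hwP1 : w ∈ P1 := by
      rw [hP1def]
      refine Submodule.mem_inf.mpr ⟨hw, ?_⟩
      have he2 : w = e1 - (e1 - w) := by abel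
      rw [he2]
      exact sub_mem (Submodule.mem_sup_left he1) (Submodule.mem_sup_right htX1)
    have hke : k = x + (w + s) := by rw [← hA1, ← hA2]; abel
    rw [hke]
    exact add_mem (Submodule.mem_sup_left hx)
      (Submodule.mem_sup_right (add_mem (Submodule.mem_sup_left hwP1)
        (Submodule.mem_sup_right hsS)))
  have hXle2 : X ≤ K1 ⊔ (P1 ⊔ S) := by
    intro x hx
    have hxT : x ∈ K1 ⊔ (D1' ⊔ M2) := by rw [hTop22]; trivial
    obtain ⟨k1, hk1, v, hv, hA1⟩ := Submodule.mem_sup.mp hxT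
    obtain ⟨w, hw, m2, hm2, hA2⟩ := Submodule.mem_sup.mp hv
    obtain ⟨e1, he1, m2', hm2', hA3⟩ := Submodule.mem_sup.mp (hK1DM hk1)
    have he : e1 + w = x - (m2' + m2) := by
      have h5 : x = (e1 + m2') + (w + m2) := by rw [← hA1, ← hA2, ← hA3]
      rw [h5]; abel
    have hu : e1 + w ∈ X1 := by
      rw [hX1def]
      refine Submodule.mem_inf.mpr ⟨add_mem (hD1M he1) (hD1'M hw), ?_⟩
      rw [he]
      exact sub_mem (Submodule.mem_sup_left hx) (Submodule.mem_sup_right (add_mem hm2' hm2))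
    have hwP1 : w ∈ P1 := by
      rw [hP1def]
      refine Submodule.mem_inf.mpr ⟨hw, ?_⟩
      have he2 : w = (e1 + w) - e1 := by abel
      rw [he2]
      exact sub_mem (Submodule.mem_sup_right hu) (Submodule.mem_sup_left he1)
    have hm2S : m2 ∈ S := by
      rw [hSdef]
      refine Submodule.mem_inf.mpr ⟨hm2, ?_⟩
      have he3 : m2 = x - (k1 + w) := by
        have h5 : x = k1 + (w + m2) := by rw [← hA1, ← hA2]
        rw [h5]; abel
      rw [he3]
      refine sub_mem (Submodule.mem_sup_left (Submodule.mem_sup_left hx)) ?_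
      exact add_mem (Submodule.mem_sup_right (hK1K hk1))
        (Submodule.mem_sup_left (Submodule.mem_sup_right hw))
    have hxe : x = k1 + (w + m2) := by rw [← hA1, ← hA2]
    rw [hxe]
    exact add_mem (Submodule.mem_sup_left hk1)
      (Submodule.mem_sup_right (add_mem (Submodule.mem_sup_left hwP1)
        (Submodule.mem_sup_right hm2S)))
  -- ### The key reduction using `h3` and `h4`
  have hdance : ∀ Y : Submodule R M, S ⊔ Y = ⊤ → Y ⊔ S0 = ⊤ := by
    intro Y hSY
    have hSY' : S ⊔ (Y ⊔ S0) = ⊤ := by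
      refine le_antisymm le_top ?_
      rw [← hSY]
      exact sup_le_sup_left le_sup_left _
    have hmod : S ⊔ ((Y ⊔ S0) ⊓ M2) = M2 := by
      have hm := sup_inf_assoc_of_le (Y ⊔ S0) hSM2
      rw [← hm, hSY', top_inf_eq]
    have hZ2 : (Y ⊔ S0) ⊓ M2 = M2 :=
      h4 _ inf_le_right (le_inf le_sup_right hS0M2) hmod
    have hM2Y : M2 ≤ Y ⊔ S0 := by rw [← hZ2]; exact inf_le_left
    refine le_antisymm le_top ?_
    rw [← hSY]
    exact sup_le (hSM2.trans hM2Y) le_sup_left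
  -- ### Conclusion
  refine ⟨DD, ⟨D1' ⊔ D2', isCompl_iff.mpr ⟨disjoint_iff.mpr hDDdisj, codisjoint_iff.mpr hDDsum⟩⟩,
    ?_, ?_⟩
  · -- `(X ⊔ DD)/DD` is small in `M/DD`
    rw [smallSub_iff_crit]
    intro Y hDY hXY
    have hXY' : X ⊔ Y = ⊤ := by
      refine le_antisymm le_top ?_
      rw [← hXY]
      exact sup_le (sup_le le_sup_left (hDY.trans le_sup_right)) le_sup_right
    have hK1Y : K1 ≤ Y := le_sup_left.trans hDY
    have hD2Y : D2 ≤ Y := le_sup_right.trans hDY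
    have hstep1 : P1 ⊔ (S ⊔ Y) = ⊤ := by
      refine le_antisymm le_top ?_
      rw [← hXY']
      refine sup_le ?_ (le_sup_right.trans le_sup_right)
      refine hXle2.trans (sup_le (hK1Y.trans (le_sup_right.trans le_sup_right))
        (sup_le le_sup_left (le_sup_left.trans le_sup_right)))
    have hSY : S ⊔ Y = ⊤ := SmP1 _ hstep1
    have hYS0 : Y ⊔ S0 = ⊤ := hdance _ hSY
    have hmod : S0 ⊔ (Y ⊓ M2) = M2 := by
      have hm := sup_inf_assoc_of_le Y hS0M2
      rw [← hm, sup_comm S0 Y, hYS0, top_inf_eq]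
    have hZ := h2b (Y ⊓ M2) inf_le_right (le_inf hD2Y hD2M) hmod
    have hM2Y : M2 ≤ Y := by rw [← hZ]; exact inf_le_left
    refine le_antisymm le_top ?_
    rw [← hYS0]
    exact sup_le le_rfl (hS0M2.trans hM2Y)
  · -- `(X ⊔ DD)/X` is small in `M/X`
    rw [smallSub_iff_crit]
    intro Y hXY hDY
    have hDY' : (K1 ⊔ D2) ⊔ Y = ⊤ := by
      refine le_antisymm le_top ?_
      rw [← hDY]
      exact sup_le (sup_le (hXY.trans le_sup_right) le_sup_left) le_sup_right
    have hstepa : P2 ⊔ (P1 ⊔ (K1 ⊔ Y)) = ⊤ := by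
      refine le_antisymm le_top ?_
      rw [← hDY']
      refine sup_le (sup_le ?_ ?_) ?_
      · exact le_sup_left.trans (le_sup_right.trans le_sup_right)
      · refine hD2le.trans (sup_le (hS0XP1.trans (sup_le ?_ ?_)) le_sup_left)
        · exact hXY.trans (le_sup_right.trans (le_sup_right.trans le_sup_right))
        · exact le_sup_left.trans le_sup_right
      · exact le_sup_right.trans (le_sup_right.trans le_sup_right)
    have h1' : P1 ⊔ (K1 ⊔ Y) = ⊤ := SmP2 _ hstepa
    have hK1Y : K1 ⊔ Y = ⊤ := SmP1 _ h1'
    have hstepb : P1 ⊔ (S ⊔ Y) = ⊤ := by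
      refine le_antisymm le_top ?_
      rw [← hK1Y]
      refine sup_le ?_ (le_sup_right.trans le_sup_right)
      refine hK1le.trans (sup_le (hXY.trans (le_sup_right.trans le_sup_right))
        (sup_le le_sup_left (le_sup_left.trans le_sup_right)))
    have hSY : S ⊔ Y = ⊤ := SmP1 _ hstepb
    have hYS0 : Y ⊔ S0 = ⊤ := hdance _ hSY
    have hfin : P1 ⊔ Y = ⊤ := by
      refine le_antisymm le_top ?_
      rw [← hYS0]
      refine sup_le le_sup_right ?_
      exact hS0XP1.trans (sup_le (hXY.trans le_sup_right) le_sup_left)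
    exact SmP1 _ hfin
end

section
/- Every H-supplemented module is FI-lifting: for every fully invariant submodule N of M there exists a direct summand K of M with K ≤ N and N/K ≪ M/K. -/
universe u v

/-- `N` is a fully invariant submodule of `M`. -/
def FullyInvariant (R : Type v) [Ring R] {M : Type u} [AddCommGroup M] [Module R M]
    (N : Submodule R M) : Prop :=
  ∀ f : M →ₗ[R] M, N.map f ≤ N

/-!
Let `D` be the direct summand that H-supplementation attaches to `N`, with complement `D'`.
Smallness of `(N + D)/N` in `M/N` forces `N + D' = M`. The projection of `M` onto `D` along `D'`
is an endomorphism killing `D'`, so it maps `N` onto all of `D`; full invariance gives `D ≤ N`,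
and then `(N + D)/D = N/D` is small in `M/D`.
-/

section

variable {R : Type v} [Ring R] {M : Type u} [AddCommGroup M] [Module R M]

theorem sup_eq_top_of_smallSub_map_mkQ {X D Y : Submodule R M}
    (hX : SmallSub R ((X ⊔ D).map X.mkQ)) (hDY : D ⊔ Y = ⊤) : X ⊔ Y = ⊤ := by
  have hY : Y.map X.mkQ = ⊤ := by
    refine hX _ ?_
    rw [← Submodule.map_sup, sup_assoc, hDY, sup_top_eq, Submodule.map_top, Submodule.range_mkQ]
  rw [← Submodule.comap_map_mkQ, hY, Submodule.comap_top]

theorem FullyInvariant.le_of_isCompl_of_sup_eq_top {N D D' : Submodule R M}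
    (hN : FullyInvariant R N) (hDD' : IsCompl D D') (hND' : N ⊔ D' = ⊤) : D ≤ N := by
  set e := D.projection D' hDD'
  have he : D'.map e = ⊥ :=
    LinearMap.le_ker_iff_map.mp (Submodule.ker_projection hDD').ge
  calc D = (⊤ : Submodule R M).map e := by
        rw [← LinearMap.range_eq_map, Submodule.range_projection]
    _ = N.map e := by rw [← hND', Submodule.map_sup, he, sup_bot_eq]
    _ ≤ N := hN e

end

theorem stmt10 {R : Type v} [Ring R] {M : Type u} [AddCommGroup M] [Module R M]
    (hH : HSupplemented R M) :
    ∀ N : Submodule R M, FullyInvariant R N →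
      ∃ K : Submodule R M, IsDirectSummand R K ∧ K ≤ N ∧ SmallSub R (N.map K.mkQ) := by
  intro N hN
  obtain ⟨D, ⟨D', hDD'⟩, hD, hND⟩ := hH N
  have hND' : N ⊔ D' = ⊤ := sup_eq_top_of_smallSub_map_mkQ hND hDD'.sup_eq_top
  have hDN : D ≤ N := hN.le_of_isCompl_of_sup_eq_top hDD' hND'
  refine ⟨D, ⟨D', hDD'⟩, hDN, ?_⟩
  rwa [sup_eq_left.mpr hDN] at hD
end

section
/- Let M = M1 ⊕ M2. If for every submodule N of M1 there exists a direct summand K of M with M2 ≤ K, (N+K)/K ≪ M/K and (N+K)/N ≪ M/N, then M1 is H-supplemented. -/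
universe u v

lemma smallSub_map_mkQ_iff_s12 {R : Type v} [Ring R] {M : Type u} [AddCommGroup M] [Module R M]
    (A p : Submodule R M) :
    SmallSub R (A.map p.mkQ) ↔
      ∀ Y : Submodule R M, p ≤ Y → A ⊔ Y = ⊤ → Y = ⊤ := by
  constructor
  · intro h Y hpY hAY
    have h1 : (A.map p.mkQ) ⊔ (Y.map p.mkQ) = ⊤ := by
      rw [← Submodule.map_sup, hAY, Submodule.map_top, Submodule.range_mkQ]
    have h2 := h _ h1
    have h3 : (Y.map p.mkQ).comap p.mkQ = Y := by
      rw [Submodule.comap_map_eq, Submodule.ker_mkQ, sup_eq_left.mpr hpY]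
    rw [h2, Submodule.comap_top] at h3
    exact h3.symm
  · intro h X hX
    have hple : p ≤ Submodule.comap p.mkQ X := by
      intro x hx
      have : p.mkQ x = 0 := (Submodule.Quotient.mk_eq_zero p).mpr hx
      simp [Submodule.mem_comap, this]
    have hsurj := p.mkQ_surjective
    have hX' : X = (X.comap p.mkQ).map p.mkQ := (Submodule.map_comap_eq_of_surjective hsurj X).symm
    have h1 : A ⊔ X.comap p.mkQ = ⊤ := by
      have : (A ⊔ X.comap p.mkQ).map p.mkQ = ⊤ := by
        rw [Submodule.map_sup, ← hX', hX]
      have := congrArg (Submodule.comap p.mkQ) this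
      rw [Submodule.comap_map_eq, Submodule.ker_mkQ, Submodule.comap_top] at this
      have hp : p ≤ A ⊔ X.comap p.mkQ := le_sup_of_le_right hple
      rwa [sup_eq_left.mpr hp] at this
    have := h _ hple h1
    rw [hX', this, Submodule.map_top, Submodule.range_mkQ]

theorem stmt12 {R : Type v} [Ring R] {M : Type u} [AddCommGroup M] [Module R M]
    (M1 M2 : Submodule R M) (hcompl : IsCompl M1 M2)
    (hyp : ∀ N : Submodule R M, N ≤ M1 →
      ∃ K : Submodule R M, IsDirectSummand R K ∧ M2 ≤ K ∧
        SmallSub R ((N ⊔ K).map K.mkQ) ∧ SmallSub R ((N ⊔ K).map N.mkQ)) :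
    HSupplemented R ↥M1 := by
  intro X
  set N : Submodule R M := X.map M1.subtype with hN
  have hNM1 : N ≤ M1 := by
    rintro _ ⟨x, _, rfl⟩; exact x.2
  obtain ⟨K, ⟨K', hKK'⟩, hM2K, hs1, hs2⟩ := hyp N hNM1
  have hs1' := (smallSub_map_mkQ_iff_s12 (N ⊔ K) K).mp hs1
  have hs2' := (smallSub_map_mkQ_iff_s12 (N ⊔ K) N).mp hs2
  set D : Submodule R ↥M1 := K.comap M1.subtype with hD
  have hmapD : D.map M1.subtype = K ⊓ M1 := by
    rw [hD, Submodule.map_comap_subtype, inf_comm]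
  have hmapDK : D.map M1.subtype ≤ K := hmapD.le.trans inf_le_left
  have hinj : Function.Injective (Submodule.map M1.subtype) :=
    Submodule.map_injective_of_injective M1.injective_subtype
  have key : ∀ Y1 : Submodule R ↥M1, Y1.map M1.subtype ⊔ M2 = ⊤ → Y1 = ⊤ := by
    intro Y1 h
    have hle : Y1.map M1.subtype ≤ M1 := by rintro _ ⟨x, _, rfl⟩; exact x.2
    have h2 : (Y1.map M1.subtype ⊔ M2) ⊓ M1 = M1 := by rw [h, top_inf_eq]
    rw [sup_inf_assoc_of_le _ hle, inf_comm M2 M1, hcompl.inf_eq_bot, sup_bot_eq] at h2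
    apply hinj
    rw [h2, Submodule.map_subtype_top]
  have hK : K = (K ⊓ M1) ⊔ M2 := by
    have h := sup_inf_assoc_of_le (α := Submodule R M) (x := M2) (z := K) M1 hM2K
    rw [sup_comm M2 M1, hcompl.sup_eq_top, top_inf_eq] at h
    rw [inf_comm K M1, sup_comm (M1 ⊓ K) M2]
    exact h
  refine ⟨D, ?_, ?_, ?_⟩
  · -- D is a direct summand of M1, complement: (K' ⊔ M2) ∩ M1
    refine ⟨(K' ⊔ M2).comap M1.subtype, ?_, ?_⟩
    · rw [Submodule.disjoint_def]
      intro x hxD hxD'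
      rw [hD, Submodule.mem_comap] at hxD
      rw [Submodule.mem_comap] at hxD'
      simp only [Submodule.subtype_apply] at hxD hxD'
      obtain ⟨y, hy, z, hz, hyz⟩ := Submodule.mem_sup.mp hxD'
      have hyK : y ∈ K := by
        have h3 : y = (x : M) - z := eq_sub_of_add_eq hyz
        rw [h3]; exact K.sub_mem hxD (hM2K hz)
      have hy0 : y = 0 := (Submodule.disjoint_def.mp hKK'.disjoint) y hyK hy
      have hxM2 : (x : M) ∈ M2 := by
        rw [← hyz, hy0, zero_add]; exact hz
      have : (x : M) = 0 := (Submodule.disjoint_def.mp hcompl.disjoint) _ x.2 hxM2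
      exact Subtype.ext this
    · rw [codisjoint_iff, eq_top_iff]
      intro x _
      have hxM : (x : M) ∈ K ⊔ K' := by rw [hKK'.sup_eq_top]; trivial
      obtain ⟨k, hk, k', hk', hkk'⟩ := Submodule.mem_sup.mp hxM
      have hk'M : k' ∈ M1 ⊔ M2 := by rw [hcompl.sup_eq_top]; trivial
      obtain ⟨a, ha, b, hb, hab⟩ := Submodule.mem_sup.mp hk'M
      have hu : (x : M) - a ∈ M1 := M1.sub_mem x.2 ha
      have huK : (x : M) - a ∈ K := by
        have h4 : (x : M) - a = k + b := by rw [← hkk', ← hab]; abel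
        rw [h4]; exact K.add_mem hk (hM2K hb)
      have haD' : a ∈ K' ⊔ M2 := by
        have h5 : a = k' + (-b) := by rw [← hab]; abel
        rw [h5]; exact Submodule.add_mem _ (Submodule.mem_sup_left hk')
          (Submodule.mem_sup_right (M2.neg_mem hb))
      refine Submodule.mem_sup.mpr ⟨⟨(x : M) - a, hu⟩, ?_, ⟨a, ha⟩, ?_, ?_⟩
      · rw [hD, Submodule.mem_comap]; exact huK
      · rw [Submodule.mem_comap]; exact haD'
      · exact Subtype.ext (by simp)
  · -- (X ⊔ D)/D small in M1/D
    rw [smallSub_map_mkQ_iff_s12]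
    intro Y1 hDY1 hsup
    apply key
    refine hs1' _ ?_ ?_
    · -- K ≤ Y1.map subtype ⊔ M2
      refine hK.le.trans (sup_le (le_sup_of_le_left ?_) le_sup_right)
      exact hmapD.symm.le.trans (Submodule.map_mono hDY1)
    · -- (N ⊔ K) ⊔ (Y1.map subtype ⊔ M2) = ⊤
      have h1 : ((X ⊔ D) ⊔ Y1).map M1.subtype = M1 := by rw [hsup, Submodule.map_subtype_top]
      rw [Submodule.map_sup, Submodule.map_sup, ← hN] at h1
      rw [eq_top_iff, ← hcompl.sup_eq_top]
      refine sup_le (le_trans h1.ge ?_) (le_sup_of_le_right le_sup_right)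
      refine sup_le (sup_le ?_ ?_) ?_
      · exact le_sup_of_le_left le_sup_left
      · exact le_sup_of_le_left (le_sup_of_le_right hmapDK)
      · exact le_sup_of_le_right le_sup_left
  · -- (X ⊔ D)/X small in M1/X
    rw [smallSub_map_mkQ_iff_s12]
    intro Y1 hXY1 hsup
    apply key
    refine hs2' _ ?_ ?_
    · -- N ≤ Y1.map subtype ⊔ M2
      exact le_sup_of_le_left (hN.le.trans (Submodule.map_mono hXY1))
    · have h1 : ((X ⊔ D) ⊔ Y1).map M1.subtype = M1 := by rw [hsup, Submodule.map_subtype_top]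
      rw [Submodule.map_sup, Submodule.map_sup, ← hN] at h1
      rw [eq_top_iff, ← hcompl.sup_eq_top]
      refine sup_le (le_trans h1.ge ?_) (le_sup_of_le_right le_sup_right)
      refine sup_le (sup_le ?_ ?_) ?_
      · exact le_sup_of_le_left le_sup_left
      · exact le_sup_of_le_left (le_sup_of_le_right hmapDK)
      · exact le_sup_of_le_right le_sup_left
end

section
/- Let M = ⊕_{i∈I} M_i with |I| ≥ 2 be a weakly supplemented module with (D3). Then M is H-supplemented if and only if there exists i ∈ I such that for every submodule K of M with M = K + M_i or M = K + M_{-i} (where M_{-i} = ⊕_{j≠i} M_j), there exists a direct summand N of M with (K+N)/K ≪ M/K and (K+N)/N ≪ M/N. -/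
universe u v

section Aux
variable {R : Type v} [Ring R] {M : Type u} [AddCommGroup M] [Module R M]

def BetaRel (X Y : Submodule R M) : Prop := ∀ L : Submodule R M, X ⊔ L = ⊤ ↔ Y ⊔ L = ⊤

lemma smallSub_mono {S S' : Submodule R M} (h : S ≤ S') (hs : SmallSub R S') :
    SmallSub R S := by
  intro T hT
  refine hs T (top_le_iff.mp ?_)
  rw [← hT]
  exact sup_le_sup h le_rfl

lemma smallSub_sup {S S' : Submodule R M} (hs : SmallSub R S) (hs' : SmallSub R S') :
    SmallSub R (S ⊔ S') := by
  intro T hT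
  rw [sup_assoc] at hT
  exact hs' T (hs _ hT)

lemma smallSub_map_iff (P W : Submodule R M) :
    SmallSub R ((W ⊔ P).map P.mkQ) ↔ ∀ L : Submodule R M, W ⊔ L = ⊤ → P ⊔ L = ⊤ := by
  constructor
  · intro h L hWL
    have htop : ((W ⊔ P) ⊔ (P ⊔ L)) = ⊤ := by
      rw [eq_top_iff, ← hWL]
      exact sup_le (le_sup_of_le_left le_sup_left) (le_sup_of_le_right le_sup_right)
    have h2 : ((W ⊔ P).map P.mkQ) ⊔ ((P ⊔ L).map P.mkQ) = ⊤ := by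
      rw [← Submodule.map_sup, htop, Submodule.map_top, Submodule.range_mkQ]
    have h3 := h _ h2
    have h4 := congrArg (Submodule.comap P.mkQ) h3
    rw [Submodule.comap_map_mkQ, Submodule.comap_top] at h4
    rw [← sup_assoc, sup_idem] at h4
    exact h4
  · intro h Y hY
    have hPL : P ≤ Y.comap P.mkQ := by
      intro x hx
      simp only [Submodule.mem_comap]
      have : P.mkQ x = 0 := by
        rw [← LinearMap.mem_ker, Submodule.ker_mkQ]; exact hx
      rw [this]; exact Submodule.zero_mem Y
    have hmapL : (Y.comap P.mkQ).map P.mkQ = Y :=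
      Submodule.map_comap_eq_self (by rw [Submodule.range_mkQ]; exact le_top)
    have htop : W ⊔ Y.comap P.mkQ = ⊤ := by
      have h1 : ((W ⊔ P) ⊔ Y.comap P.mkQ).map P.mkQ = ⊤ := by
        rw [Submodule.map_sup, hmapL, hY]
      have h2 := congrArg (Submodule.comap P.mkQ) h1
      rw [Submodule.comap_map_mkQ, Submodule.comap_top] at h2
      rw [eq_top_iff, ← h2]
      refine sup_le (le_trans hPL le_sup_right) (sup_le (sup_le le_sup_left
        (le_trans hPL le_sup_right)) le_sup_right)
    have h5 := h _ htop
    have hLtop : Y.comap P.mkQ = ⊤ := by rwa [sup_eq_right.mpr hPL] at h5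
    rw [← hmapL, hLtop, Submodule.map_top, Submodule.range_mkQ]

lemma beta_iff_smalls (X D : Submodule R M) :
    (SmallSub R ((X ⊔ D).map D.mkQ) ∧ SmallSub R ((X ⊔ D).map X.mkQ)) ↔ BetaRel X D := by
  rw [smallSub_map_iff D X]
  rw [show X ⊔ D = D ⊔ X from sup_comm X D, smallSub_map_iff X D]
  constructor
  · rintro ⟨h1, h2⟩ L
    exact ⟨fun h => h1 L h, fun h => h2 L h⟩
  · intro hb
    exact ⟨fun L h => (hb L).mp h, fun L h => (hb L).mpr h⟩


lemma key_small {Y Y' Z : Submodule R M} (hb : BetaRel Y Z) (hc : IsCompl Y Y') :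
    SmallSub R ((Y ⊔ Z) ⊓ Y') := by
  intro T hT
  have hSY' : (Y ⊔ Z) ⊓ Y' ≤ Y' := inf_le_right
  have hSYZ : (Y ⊔ Z) ⊓ Y' ≤ Y ⊔ Z := inf_le_left
  have hY'eq : Y' = ((Y ⊔ Z) ⊓ Y') ⊔ (T ⊓ Y') := by
    have hm := sup_inf_assoc_of_le T hSY'
    rw [hT, top_inf_eq] at hm
    exact hm
  have h1 : Y ⊔ (Z ⊔ (T ⊓ Y')) = ⊤ := by
    rw [eq_top_iff, ← hc.codisjoint.eq_top]
    refine sup_le le_sup_left ?_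
    refine le_trans (le_of_eq hY'eq) ?_
    exact sup_le (le_trans hSYZ (sup_le le_sup_left (le_sup_of_le_right le_sup_left)))
      (le_sup_of_le_right le_sup_right)
  have h2 : Z ⊔ (Z ⊔ (T ⊓ Y')) = ⊤ := (hb _).mp h1
  rw [← sup_assoc, sup_idem] at h2
  have h3 : Y ⊔ (T ⊓ Y') = ⊤ := (hb _).mpr h2
  have h4 : Y' ≤ T := by
    have hm := sup_inf_assoc_of_le Y (inf_le_right : T ⊓ Y' ≤ Y')
    rw [sup_comm (T ⊓ Y') Y, h3, top_inf_eq, disjoint_iff.mp hc.disjoint, sup_bot_eq] at hm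
    exact le_trans (le_of_eq hm) inf_le_left
  rw [eq_top_iff, ← hT]
  exact sup_le (le_trans hSY' h4) le_rfl

lemma construction {M1 M2 : Submodule R M} (hcompl : IsCompl M1 M2)
    (hD3 : CondD3 R M)
    (hyp : ∀ K : Submodule R M, (K ⊔ M1 = ⊤ ∨ K ⊔ M2 = ⊤) →
      ∃ N : Submodule R M, IsDirectSummand R N ∧ BetaRel K N)
    (X : Submodule R M) :
    ∃ D : Submodule R M, IsDirectSummand R D ∧ BetaRel X D := by
  have h12top : M1 ⊔ M2 = ⊤ := hcompl.codisjoint.eq_top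
  have h12bot : M1 ⊓ M2 = ⊥ := disjoint_iff.mp hcompl.disjoint
  -- ### Step 1 : Q
  have hK1 : (X ⊔ M2) ⊔ M1 = ⊤ := by
    rw [sup_assoc, sup_comm M2 M1, h12top, sup_top_eq]
  obtain ⟨Q, hQsum, hbQ⟩ := hyp (X ⊔ M2) (Or.inl hK1)
  have hQM1 : Q ⊔ M1 = ⊤ := (hbQ M1).mp hK1
  -- ### Step 2 : A and C1
  obtain ⟨A', hAc⟩ := hD3 Q M1 hQsum ⟨M2, hcompl⟩ hQM1
  have hAM1 : Q ⊓ M1 ≤ M1 := inf_le_right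
  have hAQle : Q ⊓ M1 ≤ Q := inf_le_left
  have hAC1 : (Q ⊓ M1) ⊔ (A' ⊓ M1) = M1 := by
    have hm := sup_inf_assoc_of_le A' hAM1
    rw [hAc.codisjoint.eq_top, top_inf_eq] at hm
    exact hm.symm
  have hC1M1 : A' ⊓ M1 ≤ M1 := inf_le_right
  have hAC1bot : (Q ⊓ M1) ⊓ (A' ⊓ M1) = ⊥ := by
    rw [← le_bot_iff, ← disjoint_iff.mp hAc.disjoint]
    exact le_inf inf_le_left (le_trans inf_le_right inf_le_left)
  have hQC1bot : Q ⊓ (A' ⊓ M1) = ⊥ := by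
    rw [← le_bot_iff, ← hAC1bot]
    exact le_inf (le_inf inf_le_left (le_trans inf_le_right inf_le_right)) inf_le_right
  have hQC1top : Q ⊔ (A' ⊓ M1) = ⊤ := by
    calc Q ⊔ (A' ⊓ M1) = Q ⊔ ((Q ⊓ M1) ⊔ (A' ⊓ M1)) := by
          rw [← sup_assoc, sup_eq_left.mpr hAQle]
      _ = ⊤ := by rw [hAC1, hQM1]
  -- ### Step 3 : N
  have hXM2C1 : (X ⊔ M2) ⊔ (A' ⊓ M1) = ⊤ := (hbQ _).mpr hQC1top
  have hK2 : (X ⊔ (A' ⊓ M1)) ⊔ M2 = ⊤ := by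
    rw [sup_right_comm] at hXM2C1; exact hXM2C1
  obtain ⟨N, hNsum, hbN⟩ := hyp (X ⊔ (A' ⊓ M1)) (Or.inr hK2)
  have hNM2 : N ⊔ M2 = ⊤ := (hbN M2).mp hK2
  -- ### Step 4 : B and C2
  obtain ⟨B', hBc⟩ := hD3 N M2 hNsum ⟨M1, hcompl.symm⟩ hNM2
  have hBM2 : N ⊓ M2 ≤ M2 := inf_le_right
  have hBC2 : (N ⊓ M2) ⊔ (B' ⊓ M2) = M2 := by
    have hm := sup_inf_assoc_of_le B' hBM2
    rw [hBc.codisjoint.eq_top, top_inf_eq] at hm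
    exact hm.symm
  have hC2M2 : B' ⊓ M2 ≤ M2 := inf_le_right
  have hNC2bot : N ⊓ (B' ⊓ M2) = ⊥ := by
    rw [← le_bot_iff, ← disjoint_iff.mp hBc.disjoint]
    exact le_inf (le_inf inf_le_left (le_trans inf_le_right inf_le_right))
      (le_trans inf_le_right inf_le_left)
  have hNC2top : N ⊔ (B' ⊓ M2) = ⊤ := by
    calc N ⊔ (B' ⊓ M2) = N ⊔ ((N ⊓ M2) ⊔ (B' ⊓ M2)) := by
          rw [← sup_assoc, sup_eq_left.mpr (inf_le_left : N ⊓ M2 ≤ N)]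
      _ = ⊤ := by rw [hBC2, hNM2]
  have hNcomplC2 : IsCompl N (B' ⊓ M2) :=
    ⟨disjoint_iff.mpr hNC2bot, codisjoint_iff.mpr hNC2top⟩
  -- ### Step 5 : N'
  have hXC1C2 : (X ⊔ (A' ⊓ M1)) ⊔ (B' ⊓ M2) = ⊤ := (hbN _).mpr hNC2top
  have hXC2C1 : (X ⊔ (B' ⊓ M2)) ⊔ (A' ⊓ M1) = ⊤ := by
    rw [sup_right_comm] at hXC1C2; exact hXC1C2
  have hK3 : (X ⊔ (B' ⊓ M2)) ⊔ M1 = ⊤ := by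
    rw [eq_top_iff, ← hXC2C1]
    exact sup_le le_sup_left (le_sup_of_le_right hC1M1)
  obtain ⟨N', hN'sum, hbN'⟩ := hyp (X ⊔ (B' ⊓ M2)) (Or.inl hK3)
  have hN'C1top : N' ⊔ (A' ⊓ M1) = ⊤ := (hbN' _).mp hXC2C1
  -- ### Step 6 : C1 is a direct summand
  have hMA : M1 ⊓ ((Q ⊓ M1) ⊔ M2) = Q ⊓ M1 := by
    have hm := sup_inf_assoc_of_le M2 hAM1
    rw [inf_comm M2 M1, h12bot, sup_bot_eq] at hm
    rw [inf_comm]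
    exact hm
  have hC1sum : IsDirectSummand R (A' ⊓ M1) := by
    refine ⟨(Q ⊓ M1) ⊔ M2, ?_, ?_⟩
    · rw [disjoint_iff, ← le_bot_iff, ← hAC1bot]
      refine le_inf ?_ inf_le_left
      calc (A' ⊓ M1) ⊓ ((Q ⊓ M1) ⊔ M2) ≤ M1 ⊓ ((Q ⊓ M1) ⊔ M2) :=
            inf_le_inf_right _ hC1M1
        _ = Q ⊓ M1 := hMA
    · rw [codisjoint_iff]
      calc (A' ⊓ M1) ⊔ ((Q ⊓ M1) ⊔ M2) = ((Q ⊓ M1) ⊔ (A' ⊓ M1)) ⊔ M2 := by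
            rw [sup_comm (A' ⊓ M1) _, sup_assoc, sup_comm M2 _, ← sup_assoc]
        _ = ⊤ := by rw [hAC1, h12top]
  -- ### Step 7 : N' ⊓ C1 is small, hence ⊥
  have hVsmall : SmallSub R (N' ⊓ (A' ⊓ M1)) := by
    intro T hT
    have hC1eq : A' ⊓ M1 = (N' ⊓ (A' ⊓ M1)) ⊔ (T ⊓ (A' ⊓ M1)) := by
      have hm := sup_inf_assoc_of_le T (inf_le_right : N' ⊓ (A' ⊓ M1) ≤ A' ⊓ M1)
      rw [hT, top_inf_eq] at hm
      exact hm
    have h1 : N' ⊔ (Q ⊔ (T ⊓ (A' ⊓ M1))) = ⊤ := by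
      rw [eq_top_iff, ← hQC1top]
      refine sup_le (le_sup_of_le_right le_sup_left) ?_
      refine le_trans (le_of_eq hC1eq) (sup_le ?_ ?_)
      · exact le_sup_of_le_left inf_le_left
      · exact le_sup_of_le_right le_sup_right
    have h2 : (X ⊔ (B' ⊓ M2)) ⊔ (Q ⊔ (T ⊓ (A' ⊓ M1))) = ⊤ := (hbN' _).mpr h1
    have h3 : Q ⊔ ((X ⊔ M2) ⊔ (T ⊓ (A' ⊓ M1))) = ⊤ := by
      rw [eq_top_iff, ← h2]
      refine sup_le (sup_le ?_ ?_) (sup_le ?_ ?_)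
      · exact le_sup_of_le_right (le_sup_of_le_left le_sup_left)
      · exact le_sup_of_le_right (le_sup_of_le_left (le_sup_of_le_right hC2M2))
      · exact le_sup_left
      · exact le_sup_of_le_right le_sup_right
    have h4 : (X ⊔ M2) ⊔ ((X ⊔ M2) ⊔ (T ⊓ (A' ⊓ M1))) = ⊤ := (hbQ _).mpr h3
    rw [← sup_assoc, sup_idem] at h4
    have h5 : Q ⊔ (T ⊓ (A' ⊓ M1)) = ⊤ := (hbQ _).mp h4
    have hC1T : A' ⊓ M1 ≤ T := by
      have hm := sup_inf_assoc_of_le Q (inf_le_right : T ⊓ (A' ⊓ M1) ≤ A' ⊓ M1)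
      rw [sup_comm (T ⊓ (A' ⊓ M1)) Q, h5, top_inf_eq, hQC1bot, sup_bot_eq] at hm
      exact le_trans (le_of_eq hm) inf_le_left
    rw [eq_top_iff, ← hT]
    exact sup_le (le_trans (le_trans inf_le_right hC1T) le_rfl) le_rfl
  obtain ⟨V', hVc⟩ := hD3 N' (A' ⊓ M1) hN'sum hC1sum hN'C1top
  have hVbot : N' ⊓ (A' ⊓ M1) = ⊥ := by
    have hV't : V' = ⊤ := hVsmall V' hVc.codisjoint.eq_top
    have h6 : N' ⊓ (A' ⊓ M1) = (N' ⊓ (A' ⊓ M1)) ⊓ V' := by rw [hV't, inf_top_eq]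
    rw [h6, ← disjoint_iff.mp hVc.disjoint]
  have hN'complC1 : IsCompl N' (A' ⊓ M1) :=
    ⟨disjoint_iff.mpr hVbot, codisjoint_iff.mpr hN'C1top⟩
  -- ### Step 8 : N ⊔ N' = ⊤ and D := N ⊓ N'
  have hNN' : N ⊔ N' = ⊤ := by
    have h6 : (X ⊔ (A' ⊓ M1)) ⊔ (X ⊔ (B' ⊓ M2)) = ⊤ := by
      rw [eq_top_iff, ← hXC1C2]
      exact sup_le (le_sup_of_le_left le_rfl) (le_sup_of_le_right le_sup_right)
    have h7 : N ⊔ (X ⊔ (B' ⊓ M2)) = ⊤ := (hbN _).mp h6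
    rw [sup_comm] at h7
    have h8 : N' ⊔ N = ⊤ := (hbN' _).mp h7
    rw [sup_comm] at h8
    exact h8
  obtain ⟨E₀, hE₀c⟩ := hD3 N N' hNsum hN'sum hNN'
  have hDN : N ⊓ N' ≤ N := inf_le_left
  have hDN' : N ⊓ N' ≤ N' := inf_le_right
  have hDND : (N ⊓ N') ⊔ (E₀ ⊓ N) = N := by
    have hm := sup_inf_assoc_of_le E₀ hDN
    rw [hE₀c.codisjoint.eq_top, top_inf_eq] at hm
    exact hm.symm
  have hNDN : E₀ ⊓ N ≤ N := inf_le_right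
  have hN'ND : IsCompl N' (E₀ ⊓ N) := by
    constructor
    · rw [disjoint_iff, ← le_bot_iff, ← disjoint_iff.mp hE₀c.disjoint]
      exact le_inf (le_inf (le_trans inf_le_right inf_le_right) inf_le_left)
        (le_trans inf_le_right inf_le_left)
    · rw [codisjoint_iff]
      calc N' ⊔ (E₀ ⊓ N) = N' ⊔ ((N ⊓ N') ⊔ (E₀ ⊓ N)) := by
            rw [← sup_assoc, sup_eq_left.mpr hDN']
        _ = N' ⊔ N := by rw [hDND]
        _ = ⊤ := by rw [sup_comm]; exact hNN'
  -- ### Step 9 : the three small submodules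
  have hbNsymm : BetaRel N (X ⊔ (A' ⊓ M1)) := fun L => (hbN L).symm
  have hbN'symm : BetaRel N' (X ⊔ (B' ⊓ M2)) := fun L => (hbN' L).symm
  have hSa : SmallSub R ((N ⊔ (X ⊔ (A' ⊓ M1))) ⊓ (B' ⊓ M2)) := key_small hbNsymm hNcomplC2
  have hSb : SmallSub R ((N' ⊔ (X ⊔ (B' ⊓ M2))) ⊓ (E₀ ⊓ N)) := key_small hbN'symm hN'ND
  have hSc : SmallSub R ((N' ⊔ (X ⊔ (B' ⊓ M2))) ⊓ (A' ⊓ M1)) := key_small hbN'symm hN'complC1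
  -- ### Step 10 : D is a direct summand with complement (E₀ ⊓ N) ⊔ (B' ⊓ M2)
  have hNint : N ⊓ ((E₀ ⊓ N) ⊔ (B' ⊓ M2)) = E₀ ⊓ N := by
    have hm := sup_inf_assoc_of_le (B' ⊓ M2) hNDN
    rw [inf_comm (B' ⊓ M2) N, hNC2bot, sup_bot_eq] at hm
    rw [inf_comm]
    exact hm
  have hDE : IsCompl (N ⊓ N') ((E₀ ⊓ N) ⊔ (B' ⊓ M2)) := by
    constructor
    · rw [disjoint_iff, ← le_bot_iff]
      have h9 : (N ⊓ N') ⊓ ((E₀ ⊓ N) ⊔ (B' ⊓ M2)) ≤ (N ⊓ N') ⊓ (E₀ ⊓ N) := by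
        refine le_inf inf_le_left ?_
        exact le_trans (inf_le_inf_right _ hDN) (le_of_eq hNint)
      refine le_trans h9 ?_
      have h10 : (N ⊓ N') ⊓ (E₀ ⊓ N) ≤ (N ⊓ N') ⊓ E₀ :=
        le_inf inf_le_left (le_trans inf_le_right inf_le_left)
      rw [← disjoint_iff.mp hE₀c.disjoint]
      exact h10
    · rw [codisjoint_iff, ← sup_assoc, hDND, hNC2top]
  -- ### Step 11 : the two modular decompositions of X ⊔ D
  have hmod1 : X ⊔ (N ⊓ N') =
      (N ⊓ N') ⊔ ((X ⊔ (N ⊓ N')) ⊓ ((E₀ ⊓ N) ⊔ (B' ⊓ M2))) := by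
    have hm := sup_inf_assoc_of_le ((E₀ ⊓ N) ⊔ (B' ⊓ M2))
      (le_sup_right : N ⊓ N' ≤ X ⊔ (N ⊓ N'))
    rw [hDE.codisjoint.eq_top, top_inf_eq,
      inf_comm ((E₀ ⊓ N) ⊔ (B' ⊓ M2)) (X ⊔ (N ⊓ N'))] at hm
    exact hm
  have hXCC : X ⊔ ((A' ⊓ M1) ⊔ (B' ⊓ M2)) = ⊤ := by
    rw [← sup_assoc]; exact hXC1C2
  have hmod2 : X ⊔ (N ⊓ N') =
      X ⊔ ((X ⊔ (N ⊓ N')) ⊓ ((A' ⊓ M1) ⊔ (B' ⊓ M2))) := by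
    have hm := sup_inf_assoc_of_le ((A' ⊓ M1) ⊔ (B' ⊓ M2))
      (le_sup_left : X ≤ X ⊔ (N ⊓ N'))
    rw [hXCC, top_inf_eq,
      inf_comm ((A' ⊓ M1) ⊔ (B' ⊓ M2)) (X ⊔ (N ⊓ N'))] at hm
    exact hm
  -- ### Step 12 : the error terms are small
  have hXDle1 : X ⊔ (N ⊓ N') ≤ N ⊔ (X ⊔ (A' ⊓ M1)) :=
    sup_le (le_sup_of_le_right le_sup_left) (le_sup_of_le_left hDN)
  have hXDle2 : X ⊔ (N ⊓ N') ≤ N' ⊔ (X ⊔ (B' ⊓ M2)) :=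
    sup_le (le_sup_of_le_right le_sup_left) (le_sup_of_le_left hDN')
  have hS1le : (X ⊔ (N ⊓ N')) ⊓ ((E₀ ⊓ N) ⊔ (B' ⊓ M2)) ≤
      ((N' ⊔ (X ⊔ (B' ⊓ M2))) ⊓ (E₀ ⊓ N)) ⊔ ((N ⊔ (X ⊔ (A' ⊓ M1))) ⊓ (B' ⊓ M2)) := by
    intro w hw
    obtain ⟨hw1, hw2⟩ := Submodule.mem_inf.mp hw
    obtain ⟨a, ha, b, hb, hab⟩ := Submodule.mem_sup.mp hw2
    have hbmem : b ∈ (N ⊔ (X ⊔ (A' ⊓ M1))) ⊓ (B' ⊓ M2) := by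
      refine Submodule.mem_inf.mpr ⟨?_, hb⟩
      have hw' : w ∈ N ⊔ (X ⊔ (A' ⊓ M1)) := hXDle1 hw1
      have ha' : a ∈ N ⊔ (X ⊔ (A' ⊓ M1)) := Submodule.mem_sup_left (hNDN ha)
      have hba : b = w - a := by rw [← hab]; abel
      rw [hba]; exact sub_mem hw' ha'
    have hamem : a ∈ (N' ⊔ (X ⊔ (B' ⊓ M2))) ⊓ (E₀ ⊓ N) := by
      refine Submodule.mem_inf.mpr ⟨?_, ha⟩
      have hw' : w ∈ N' ⊔ (X ⊔ (B' ⊓ M2)) := hXDle2 hw1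
      have hb' : b ∈ N' ⊔ (X ⊔ (B' ⊓ M2)) :=
        Submodule.mem_sup_right (Submodule.mem_sup_right hb)
      have hab' : a = w - b := by rw [← hab]; abel
      rw [hab']; exact sub_mem hw' hb'
    rw [← hab]
    exact Submodule.add_mem_sup hamem hbmem
  have hS2le : (X ⊔ (N ⊓ N')) ⊓ ((A' ⊓ M1) ⊔ (B' ⊓ M2)) ≤
      ((N' ⊔ (X ⊔ (B' ⊓ M2))) ⊓ (A' ⊓ M1)) ⊔ ((N ⊔ (X ⊔ (A' ⊓ M1))) ⊓ (B' ⊓ M2)) := by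
    intro w hw
    obtain ⟨hw1, hw2⟩ := Submodule.mem_inf.mp hw
    obtain ⟨a, ha, b, hb, hab⟩ := Submodule.mem_sup.mp hw2
    have hbmem : b ∈ (N ⊔ (X ⊔ (A' ⊓ M1))) ⊓ (B' ⊓ M2) := by
      refine Submodule.mem_inf.mpr ⟨?_, hb⟩
      have hw' : w ∈ N ⊔ (X ⊔ (A' ⊓ M1)) := hXDle1 hw1
      have ha' : a ∈ N ⊔ (X ⊔ (A' ⊓ M1)) := Submodule.mem_sup_right (Submodule.mem_sup_right ha)
      have hba : b = w - a := by rw [← hab]; abel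
      rw [hba]; exact sub_mem hw' ha'
    have hamem : a ∈ (N' ⊔ (X ⊔ (B' ⊓ M2))) ⊓ (A' ⊓ M1) := by
      refine Submodule.mem_inf.mpr ⟨?_, ha⟩
      have hw' : w ∈ N' ⊔ (X ⊔ (B' ⊓ M2)) := hXDle2 hw1
      have hb' : b ∈ N' ⊔ (X ⊔ (B' ⊓ M2)) := Submodule.mem_sup_right (Submodule.mem_sup_right hb)
      have hab' : a = w - b := by rw [← hab]; abel
      rw [hab']; exact sub_mem hw' hb'
    rw [← hab]
    exact Submodule.add_mem_sup hamem hbmem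
  have hS1small : SmallSub R ((X ⊔ (N ⊓ N')) ⊓ ((E₀ ⊓ N) ⊔ (B' ⊓ M2))) :=
    smallSub_mono hS1le (smallSub_sup hSb hSa)
  have hS2small : SmallSub R ((X ⊔ (N ⊓ N')) ⊓ ((A' ⊓ M1) ⊔ (B' ⊓ M2))) :=
    smallSub_mono hS2le (smallSub_sup hSc hSa)
  -- ### Step 13 : conclusion
  refine ⟨N ⊓ N', ⟨(E₀ ⊓ N) ⊔ (B' ⊓ M2), hDE⟩, ?_⟩
  intro L
  constructor
  · intro hXL
    have h11 : (X ⊔ (N ⊓ N')) ⊔ L = ⊤ := by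
      rw [eq_top_iff, ← hXL]
      exact sup_le (le_sup_of_le_left le_sup_left) le_sup_right
    rw [hmod1] at h11
    rw [sup_assoc] at h11
    rw [sup_comm ((X ⊔ (N ⊓ N')) ⊓ ((E₀ ⊓ N) ⊔ (B' ⊓ M2))) L] at h11
    rw [← sup_assoc] at h11
    rw [sup_comm (N ⊓ N') L] at h11
    rw [sup_comm] at h11
    have h12 := hS1small _ h11
    rw [sup_comm] at h12
    exact h12
  · intro hDL
    have h11 : (X ⊔ (N ⊓ N')) ⊔ L = ⊤ := by
      rw [eq_top_iff, ← hDL]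
      exact sup_le (le_sup_of_le_left le_sup_right) le_sup_right
    rw [hmod2] at h11
    rw [sup_assoc] at h11
    rw [sup_comm ((X ⊔ (N ⊓ N')) ⊓ ((A' ⊓ M1) ⊔ (B' ⊓ M2))) L] at h11
    rw [← sup_assoc] at h11
    rw [sup_comm X L] at h11
    rw [sup_comm] at h11
    have h12 := hS2small _ h11
    rw [sup_comm] at h12
    exact h12

end Aux

theorem stmt16 {R : Type v} [Ring R] {M : Type u} [AddCommGroup M] [Module R M]
    {I : Type*} [Nontrivial I] (Mf : I → Submodule R M)
    (hind : iSupIndep Mf) (hsum : ⨆ i, Mf i = ⊤)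
    (hws : WeaklySupplemented R M) (hD3 : CondD3 R M) :
    HSupplemented R M ↔
      ∃ i : I, ∀ K : Submodule R M,
        (K ⊔ Mf i = ⊤ ∨ K ⊔ (⨆ j ∈ ({i}ᶜ : Set I), Mf j) = ⊤) →
        ∃ N : Submodule R M, IsDirectSummand R N ∧
          SmallSub R ((K ⊔ N).map K.mkQ) ∧ SmallSub R ((K ⊔ N).map N.mkQ) := by
  constructor
  · intro hH
    obtain ⟨i⟩ : Nonempty I := inferInstance
    refine ⟨i, fun K _ => ?_⟩
    obtain ⟨D, hDs, h1, h2⟩ := hH K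
    exact ⟨D, hDs, h2, h1⟩
  · rintro ⟨i, hi⟩
    have hdisj : Disjoint (Mf i) (⨆ j ∈ ({i}ᶜ : Set I), Mf j) := by
      simpa using hind i
    have hcod : Mf i ⊔ (⨆ j ∈ ({i}ᶜ : Set I), Mf j) = ⊤ := by
      rw [eq_top_iff, ← hsum]
      refine iSup_le fun j => ?_
      by_cases h : j = i
      · subst h; exact le_sup_left
      · exact le_sup_of_le_right (le_biSup (fun j => Mf j) (by simpa using h))
    have hcompl : IsCompl (Mf i) (⨆ j ∈ ({i}ᶜ : Set I), Mf j) :=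
      ⟨hdisj, codisjoint_iff.mpr hcod⟩
    intro X
    obtain ⟨D, hDs, hbXD⟩ := construction hcompl hD3 (fun K hK => by
      obtain ⟨Nn, hNs, hs1, hs2⟩ := hi K hK
      exact ⟨Nn, hNs, (beta_iff_smalls K Nn).mp ⟨hs2, hs1⟩⟩) X
    exact ⟨D, hDs, (beta_iff_smalls X D).mpr hbXD⟩
end

section
/- Over a discrete valuation ring R with field of fractions K and maximal ideal P, the R-module M = (K/R) ⊕ (R/P) is H-supplemented. -/
universe u v

/-!
Write `M = Q × S` with `Q = K/R` and `S = R/P`, a simple module killed by a uniformizer `ϖ`.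
Since `R` is a valuation ring, the cyclic submodules of `Q` form a chain; as every element of `Q`
is killed by a power of `ϖ`, each proper submodule of `Q` is killed by some `ϖ ^ n`, while `Q`
itself is divisible. A submodule killed by `a` and lying in the image of an `a`-divisible module
is small. So for a submodule `X`: if `Q ≤ X`, then `X` is `Q` or `M` (as `Q` is a coatom) and
`D = X` works; otherwise `X ∩ Q` is killed by `ϖ ^ n`, hence `X` by `ϖ ^ (n + 1)`, and
`D = 0` works when `X ≤ Q`, while `D = S` works when `Q + X = M`.
-/

open Submodule LinearMap

section Ring

variable {R : Type v} [Ring R] {M : Type u} [AddCommGroup M] [Module R M]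

lemma smallSub_bot : SmallSub R (⊥ : Submodule R M) := fun X hX => by simpa using hX

lemma isCoatom_range_inl {S : Type*} [AddCommGroup S] [Module R S] [IsSimpleModule R S] :
    IsCoatom (range (inl R M S)) := by
  rw [range_inl]
  exact isCoatom_ker_of_surjective snd_surjective

end Ring

section CommRing

variable {R : Type v} [CommRing R] {M : Type u} [AddCommGroup M] [Module R M]

lemma smallSub_of_le_range_of_le_torsionBy {P : Type*} [AddCommGroup P] [Module R P] {a : R}
    (hP : ∀ p : P, ∃ p', a • p' = p) (f : P →ₗ[R] M) {N : Submodule R M}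
    (hNf : N ≤ range f) (hNa : N ≤ torsionBy R M a) : SmallSub R N := by
  intro Y hY
  have hfY : range f ≤ Y := by
    rintro _ ⟨p, rfl⟩
    obtain ⟨p', rfl⟩ := hP p
    obtain ⟨n, hn, y, hy, hny⟩ := mem_sup.mp (hY ▸ mem_top : f p' ∈ N ⊔ Y)
    rw [map_smul, ← hny, smul_add, (mem_torsionBy_iff _ _).mp (hNa hn), zero_add]
    exact Y.smul_mem a hy
  rw [← hY, sup_eq_right.mpr (hNf.trans hfY)]

lemma smallSub_map_mkQ_of_le_range_sup {P : Type*} [AddCommGroup P] [Module R P] {a : R}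
    (hP : ∀ p : P, ∃ p', a • p' = p) (f : P →ₗ[R] M) {N W : Submodule R M}
    (hNf : N ≤ range f ⊔ W) (hNa : N ≤ torsionBy R M a) : SmallSub R (N.map W.mkQ) := by
  refine smallSub_of_le_range_of_le_torsionBy hP (W.mkQ ∘ₗ f) ?_ ?_
  · rw [range_comp, ← sup_bot_eq (map W.mkQ (range f)), ← mkQ_map_self W,
      ← Submodule.map_sup]
    exact map_mono hNf
  · rintro _ ⟨x, hx, rfl⟩
    rw [mem_torsionBy_iff, ← map_smul, (mem_torsionBy_iff _ _).mp (hNa hx), map_zero]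

lemma exists_le_torsionBy_pow_or_eq_top {a : R}
    (hchain : ∀ x y : M, x ∈ R ∙ y ∨ y ∈ R ∙ x)
    (htors : ∀ x : M, ∃ n : ℕ, a ^ n • x = 0) (N : Submodule R M) :
    (∃ n : ℕ, N ≤ torsionBy R M (a ^ n)) ∨ N = ⊤ := by
  refine or_iff_not_imp_left.mpr fun hN => eq_top_iff.mpr fun y _ => ?_
  obtain ⟨m, hm⟩ := htors y
  obtain ⟨x, hxN, hx⟩ := SetLike.not_le_iff_exists.mp (not_exists.mp hN m)
  rcases hchain x y with hxy | hyx
  · obtain ⟨r, rfl⟩ := mem_span_singleton.mp hxy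
    exact absurd (by rw [mem_torsionBy_iff, smul_comm, hm, smul_zero]) hx
  · exact span_singleton_le_iff_mem x N |>.mpr hxN hyx

variable {S : Type*} [AddCommGroup S] [Module R S]

lemma range_inr_le_torsionBy {a : R} (hS : Module.IsTorsionBy R S a) :
    range (inr R M S) ≤ torsionBy R (M × S) a := by
  rintro _ ⟨c, rfl⟩
  rw [mem_torsionBy_iff, inr_apply, Prod.smul_mk, smul_zero, hS]
  rfl

lemma le_torsionBy_mul_of_comap_inl_le {a b : R} (hS : Module.IsTorsionBy R S a)
    {X : Submodule R (M × S)} (hX : X.comap (inl R M S) ≤ torsionBy R M b) :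
    X ≤ torsionBy R (M × S) (b * a) := by
  rintro ⟨q, c⟩ hx
  have haq : a • q ∈ X.comap (inl R M S) := by
    have := X.smul_mem a hx
    rwa [Prod.smul_mk, hS] at this
  rw [mem_torsionBy_iff, Prod.smul_mk, mul_smul, (mem_torsionBy_iff _ _).mp (hX haq), mul_comm,
    mul_smul, hS]
  rfl

lemma hSupplemented_prod_of_isTorsionBy [IsSimpleModule R S] {a : R}
    (hS : Module.IsTorsionBy R S a) (hchain : ∀ x y : M, x ∈ R ∙ y ∨ y ∈ R ∙ x)
    (htors : ∀ x : M, ∃ n : ℕ, a ^ n • x = 0)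
    (hdiv : ∀ (n : ℕ) (x : M), ∃ y, a ^ n • y = x) :
    HSupplemented R (M × S) := by
  have hA : IsCoatom (range (inl R M S)) := isCoatom_range_inl
  intro X
  by_cases hAX : range (inl R M S) ≤ X
  · have hX : IsDirectSummand R X := by
      rcases hA.le_iff.mp hAX with rfl | rfl
      · exact ⟨⊥, isCompl_top_bot⟩
      · exact ⟨_, isCompl_range_inl_inr⟩
    refine ⟨X, hX, ?_, ?_⟩ <;> rw [sup_idem, mkQ_map_self] <;> exact smallSub_bot
  obtain ⟨n, hn⟩ := (exists_le_torsionBy_pow_or_eq_top hchain htors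
    (X.comap (inl R M S))).resolve_right (mt range_le_iff_comap.mpr hAX)
  have hXtors : X ≤ torsionBy R (M × S) (a ^ (n + 1)) :=
    pow_succ a n ▸ le_torsionBy_mul_of_comap_inl_le hS hn
  by_cases hXA : X ≤ range (inl R M S)
  · rw [← sup_bot_eq X] at hXtors
    refine ⟨⊥, ⟨⊤, isCompl_bot_top⟩, ?_, ?_⟩
    · exact smallSub_map_mkQ_of_le_range_sup (hdiv _) _ (sup_le_sup_right hXA ⊥) hXtors
    · exact smallSub_map_mkQ_of_le_range_sup (hdiv _) _ (sup_le (hXA.trans le_sup_left) bot_le)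
        hXtors
  · have hAX_top : range (inl R M S) ⊔ X = ⊤ := hA.2 _ (left_lt_sup.mpr hXA)
    have hXB : X ⊔ range (inr R M S) ≤ torsionBy R (M × S) (a ^ (n + 1)) :=
      sup_le hXtors ((range_inr_le_torsionBy hS).trans
        (torsionBy_le_torsionBy_of_dvd _ _ (dvd_pow_self a n.succ_ne_zero)))
    refine ⟨range (inr R M S), ⟨_, isCompl_range_inl_inr.symm⟩, ?_, ?_⟩
    · exact smallSub_map_mkQ_of_le_range_sup (hdiv _) _
        (le_top.trans_eq sup_range_inl_inr.symm) hXB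
    · exact smallSub_map_mkQ_of_le_range_sup (hdiv _) _ (le_top.trans_eq hAX_top.symm) hXB

end CommRing

section FractionFieldModRing

variable {R : Type v} [CommRing R] {K : Type v} [Field K] [Algebra R K]

lemma exists_smul_eq_of_algebraMap_ne_zero {r : R} (hr : algebraMap R K r ≠ 0)
    (x : K ⧸ range (Algebra.linearMap R K)) : ∃ y, r • y = x := by
  obtain ⟨z, rfl⟩ := Submodule.Quotient.mk_surjective _ x
  refine ⟨Submodule.Quotient.mk ((algebraMap R K r)⁻¹ * z), ?_⟩
  rw [← Submodule.Quotient.mk_smul, Algebra.smul_def, ← mul_assoc, mul_inv_cancel₀ hr,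
    one_mul]

lemma mem_span_singleton_or_mem_span_singleton_of_valuationRing [IsDomain R] [ValuationRing R]
    [IsFractionRing R K] (x y : K ⧸ range (Algebra.linearMap R K)) :
    x ∈ R ∙ y ∨ y ∈ R ∙ x := by
  obtain ⟨z, rfl⟩ := Submodule.Quotient.mk_surjective _ x
  obtain ⟨w, rfl⟩ := Submodule.Quotient.mk_surjective _ y
  -- the order on the value group is `[z] ≤ [w] ↔ ∃ c : R, c • w = z`
  obtain ⟨c, hc⟩ | ⟨c, hc⟩ : (∃ c : R, c • w = z) ∨ ∃ c : R, c • z = w :=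
    ValuationRing.le_total R K (_root_.Quotient.mk'' z) (_root_.Quotient.mk'' w)
  · exact Or.inl (mem_span_singleton.mpr ⟨c, by rw [← Submodule.Quotient.mk_smul, hc]⟩)
  · exact Or.inr (mem_span_singleton.mpr ⟨c, by rw [← Submodule.Quotient.mk_smul, hc]⟩)

lemma exists_pow_smul_eq_zero_of_irreducible [IsDomain R] [IsDiscreteValuationRing R]
    [IsFractionRing R K] {ϖ : R} (hϖ : Irreducible ϖ) (x : K ⧸ range (Algebra.linearMap R K)) :
    ∃ n : ℕ, ϖ ^ n • x = 0 := by
  obtain ⟨z, rfl⟩ := Submodule.Quotient.mk_surjective _ x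
  obtain ⟨a, b, hb, rfl⟩ := IsFractionRing.div_surjective R z
  obtain ⟨n, u, hbu⟩ :=
    IsDiscreteValuationRing.eq_unit_mul_pow_irreducible (nonZeroDivisors.ne_zero hb) hϖ
  have hbϖ : b ∣ ϖ ^ n := ⟨↑u⁻¹, by rw [hbu, mul_right_comm, Units.mul_inv, one_mul]⟩
  refine ⟨n, (mem_torsionBy_iff _ _).mp (torsionBy_le_torsionBy_of_dvd b _ hbϖ ?_)⟩
  rw [mem_torsionBy_iff, ← Submodule.Quotient.mk_smul, Submodule.Quotient.mk_eq_zero,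
    Algebra.smul_def, mul_div_cancel₀ _ (IsFractionRing.to_map_ne_zero_of_mem_nonZeroDivisors hb)]
  exact mem_range_self _ a

end FractionFieldModRing

theorem stmt17 {R : Type v} [CommRing R] [IsDomain R] [IsDiscreteValuationRing R]
    (K : Type v) [Field K] [Algebra R K] [IsFractionRing R K] :
    HSupplemented R
      ((K ⧸ LinearMap.range (Algebra.linearMap R K)) ×
        (R ⧸ (IsLocalRing.maximalIdeal R))) := by
  obtain ⟨ϖ, hϖ⟩ := IsDiscreteValuationRing.exists_irreducible R
  have : IsSimpleModule R (R ⧸ IsLocalRing.maximalIdeal R) :=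
    isSimpleModule_iff_isCoatom.mpr (IsLocalRing.maximalIdeal.isMaximal R).out
  refine hSupplemented_prod_of_isTorsionBy (a := ϖ) ?_
    mem_span_singleton_or_mem_span_singleton_of_valuationRing
    (exists_pow_smul_eq_zero_of_irreducible hϖ)
    fun n => exists_smul_eq_of_algebraMap_ne_zero ?_
  · rintro ⟨c⟩
    exact (Submodule.Quotient.mk_eq_zero _).mpr (Ideal.mul_mem_right c _ hϖ.not_isUnit)
  · exact (map_ne_zero_iff _ (IsFractionRing.injective R K)).mpr (pow_ne_zero n hϖ.ne_zero)
end
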